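/- arXiv:1912.03757 — 6 statements merged into one kernel-verified Lean document; each statement's English description precedes it below -/
import Mathlib

section
/- Let A be a Young function and let ξ be a nonzero real number such that ∫_0^c A(s) s^{1/ξ−1} ds < ∞ for some c>0. Define E_ξ(t) := |ξ|^{−1} t^{−1/ξ} ∫_0^t A(s) s^{1/ξ−1} ds for t∈(0,∞). Then E_ξ is a strictly increasing map of (0,∞) onto (0,∞); in particular E_ξ(t) = |ξ|^{−1} ∫_0^1 A(ts) s^{1/ξ−1} ds, E_ξ(t)→0 as t→0+ and E_ξ(t)→∞ as t→∞. -/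
open MeasureTheory Filter Set Real Topology
open scoped ENNReal

noncomputable section

/-- `A` is a Young function with density `a`: `a` is nonnegative (forced by `a 0 = 0` and
monotonicity), vanishes at `0`, is positive on `(0,∞)`, nondecreasing on `[0,∞)`,
right-continuous, tends to infinity, and `A t = ∫₀ᵗ a`. -/
def IsYoungWith (A a : ℝ → ℝ) : Prop :=
  a 0 = 0 ∧ (∀ s, 0 < s → 0 < a s) ∧
  MonotoneOn a (Set.Ici 0) ∧
  (∀ s, 0 ≤ s → ContinuousWithinAt a (Set.Ici s) s) ∧
  Filter.Tendsto a Filter.atTop Filter.atTop ∧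
  (∀ t, 0 ≤ t → A t = ∫ s in (0:ℝ)..t, a s)

/-- `A` is a Young function. -/
def IsYoung (A : ℝ → ℝ) : Prop := ∃ a, IsYoungWith A a

/-- `E_ξ(t) = |ξ|⁻¹ t^{-1/ξ} ∫₀ᵗ A(s) s^{1/ξ-1} ds`. -/
def Efun (A : ℝ → ℝ) (ξ : ℝ) (t : ℝ) : ℝ :=
  |ξ|⁻¹ * t ^ (-(1/ξ)) * ∫ s in Set.Ioo (0:ℝ) t, A s * s ^ (1/ξ - 1)

/-!
Substituting `s ↦ t s` gives `E_ξ(t) = |ξ|⁻¹ ∫₀¹ A(t s) s^{1/ξ-1} ds`, which is strictly increasing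
in `t` because `A` is. Since `a` is nondecreasing, `A(l u) ≤ l A(u)` for `0 < l ≤ 1`, so
`E_ξ(t) ≤ t E_ξ(1)` for `t ≤ 1`; and restricting to `s ∈ (1/2, 1)` gives
`E_ξ(t) ≥ C A(t/2)` with `C > 0`, which tends to infinity with `A`. The original form
`|ξ|⁻¹ t^{-1/ξ} ∫₀ᵗ A(s) s^{1/ξ-1} ds` shows that `E_ξ` is continuous on `(0, ∞)`, so the
intermediate value theorem yields surjectivity onto `(0, ∞)`.
-/

theorem setIntegral_lt_setIntegral_of_forall_lt {α : Type*} [MeasurableSpace α] {μ : Measure α}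
    {s : Set α} {f g : α → ℝ} (hs : MeasurableSet s) (hμs : μ s ≠ 0)
    (hf : IntegrableOn f s μ) (hg : IntegrableOn g s μ) (hlt : ∀ x ∈ s, f x < g x) :
    ∫ x in s, f x ∂μ < ∫ x in s, g x ∂μ := by
  rw [← sub_pos, ← integral_sub hg hf, setIntegral_pos_iff_support_of_nonneg_ae
    ((ae_restrict_mem hs).mono fun x hx => sub_nonneg.2 (hlt x hx).le) (hg.sub hf)]
  refine (pos_iff_ne_zero.2 hμs).trans_le (measure_mono fun x hx => ⟨?_, hx⟩)
  exact (sub_pos.2 (hlt x hx)).ne'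

theorem integrableOn_Ioo_rpow_of_pos {a b : ℝ} (q : ℝ) (ha : 0 < a) :
    IntegrableOn (fun s : ℝ => s ^ q) (Ioo a b) :=
  (continuousOn_id.rpow_const fun _ hs => Or.inl (ha.trans_le hs.1).ne').integrableOn_Icc.mono_set
    Ioo_subset_Icc_self

theorem integrableOn_Ioo_zero_of_continuousOn_Ioi {F : ℝ → ℝ} {c t : ℝ}
    (hF : IntegrableOn F (Ioo 0 c)) (hc : 0 < c) (hcont : ContinuousOn F (Ioi 0)) :
    IntegrableOn F (Ioo 0 t) := by
  have hFc : IntegrableOn F (Icc c t) :=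
    (hcont.mono fun x hx => hc.trans_le hx.1).integrableOn_Icc
  refine (hF.union hFc).mono_set fun x hx => ?_
  rcases lt_or_ge x c with hxc | hxc
  · exact Or.inl ⟨hx.1, hxc⟩
  · exact Or.inr ⟨hxc, hx.2.le⟩

theorem continuousOn_integral_Ioo_zero {F : ℝ → ℝ} (hF : ∀ t, IntegrableOn F (Ioo 0 t)) :
    ContinuousOn (fun t => ∫ s in Ioo 0 t, F s) (Ioi 0) := by
  intro x (hx : 0 < x)
  have hFx : IntegrableOn F (Icc 0 (x + 1)) := (integrableOn_Icc_iff_integrableOn_Ioo).2 (hF _)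
  have hprim : ContinuousOn (fun t => ∫ s in Ioo 0 t, F s) (Icc 0 (x + 1)) := by
    simpa only [integral_Ioc_eq_integral_Ioo] using intervalIntegral.continuousOn_primitive hFx
  exact (hprim.continuousAt (Icc_mem_nhds hx (by linarith))).continuousWithinAt

theorem integral_Ioo_zero_mul_rpow (g : ℝ → ℝ) (q : ℝ) {t : ℝ} (ht : 0 < t) :
    ∫ s in Ioo 0 t, g s * s ^ (q - 1) = t ^ q * ∫ s in Ioo 0 1, g (t * s) * s ^ (q - 1) := by
  calc ∫ s in Ioo 0 t, g s * s ^ (q - 1)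
      = t * ∫ s in (0:ℝ)..1, g (t * s) * (t * s) ^ (q - 1) := by
        rw [intervalIntegral.integral_comp_mul_left (fun s => g s * s ^ (q - 1)) ht.ne',
          mul_zero, mul_one, smul_eq_mul, ← mul_assoc, mul_inv_cancel₀ ht.ne', one_mul,
          intervalIntegral.integral_of_le ht.le, integral_Ioc_eq_integral_Ioo]
    _ = t * ∫ s in Ioo 0 1, t ^ (q - 1) * (g (t * s) * s ^ (q - 1)) := by
        rw [intervalIntegral.integral_of_le zero_le_one, integral_Ioc_eq_integral_Ioo]
        congr 1
        refine setIntegral_congr_fun measurableSet_Ioo fun s hs => ?_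
        rw [mul_rpow ht.le hs.1.le]
        ring
    _ = t ^ q * ∫ s in Ioo 0 1, g (t * s) * s ^ (q - 1) := by
        rw [integral_const_mul, ← mul_assoc, rpow_sub_one ht.ne', mul_div_cancel₀ _ ht.ne']

theorem MeasureTheory.IntegrableOn.comp_mul_rpow_Ioo_zero_one {g : ℝ → ℝ} {q t : ℝ}
    (ht : 0 < t) (hg : IntegrableOn (fun s => g s * s ^ (q - 1)) (Ioo 0 t)) :
    IntegrableOn (fun s => g (t * s) * s ^ (q - 1)) (Ioo 0 1) := by
  have hcomp := ((intervalIntegrable_iff_integrableOn_Ioo_of_le ht.le).2 hg).comp_mul_left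
    (c := t)
  rw [zero_div, div_self ht.ne', intervalIntegrable_iff_integrableOn_Ioo_of_le zero_le_one]
    at hcomp
  refine IntegrableOn.congr_fun (hcomp.const_mul (t ^ (1 - q))) (fun s hs => ?_)
    measurableSet_Ioo
  rw [mul_rpow ht.le hs.1.le, show t ^ (1 - q) * (g (t * s) * (t ^ (q - 1) * s ^ (q - 1)))
    = t ^ (1 - q) * t ^ (q - 1) * (g (t * s) * s ^ (q - 1)) by ring, ← rpow_add ht]
  simp

theorem image_Ioi_zero_eq_Ioi_zero {f : ℝ → ℝ} (hcont : ContinuousOn f (Ioi 0))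
    (hpos : ∀ t, 0 < t → 0 < f t) (h0 : Tendsto f (𝓝[>] 0) (𝓝 0))
    (htop : Tendsto f atTop atTop) : f '' Ioi 0 = Ioi 0 := by
  refine (mapsTo_iff_image_subset.1 fun t ht => hpos t ht).antisymm fun y hy => ?_
  obtain ⟨t₁, hft₁, ht₁⟩ := ((h0.eventually (gt_mem_nhds hy)).and self_mem_nhdsWithin).exists
  obtain ⟨t₂, hft₂, ht₂⟩ := ((htop.eventually_gt_atTop y).and (eventually_gt_atTop 0)).exists
  have hsub : uIcc t₁ t₂ ⊆ Ioi 0 := fun t ht => (lt_min (mem_Ioi.1 ht₁) ht₂).trans_le ht.1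
  obtain ⟨t, ht, rfl⟩ := intermediate_value_uIcc (hcont.mono hsub)
    (mem_uIcc.2 (Or.inl ⟨hft₁.le, hft₂.le⟩))
  exact ⟨t, hsub ht, rfl⟩

namespace IsYoungWith

variable {A a : ℝ → ℝ}

theorem density_nonneg (h : IsYoungWith A a) {s : ℝ} (hs : 0 ≤ s) : 0 ≤ a s := by
  have ⟨ha0, _, hmono, _⟩ := h
  exact ha0 ▸ hmono self_mem_Ici hs hs

theorem intervalIntegrable (h : IsYoungWith A a) {x y : ℝ} (hx : 0 ≤ x) (hy : 0 ≤ y) :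
    IntervalIntegrable a volume x y := by
  have ⟨_, _, hmono, _⟩ := h
  exact (hmono.mono fun _ hz => (le_min hx hy).trans hz.1).intervalIntegrable

theorem map_zero (h : IsYoungWith A a) : A 0 = 0 := by
  have ⟨_, _, _, _, _, hA⟩ := h
  simpa using hA 0 le_rfl

theorem add_integral (h : IsYoungWith A a) {u v : ℝ} (hu : 0 ≤ u) (huv : u ≤ v) :
    A v = A u + ∫ s in u..v, a s := by
  have ⟨_, _, _, _, _, hA⟩ := h
  rw [hA u hu, hA v (hu.trans huv),
    intervalIntegral.integral_add_adjacent_intervals (h.intervalIntegrable le_rfl hu)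
      (h.intervalIntegrable hu (hu.trans huv))]

theorem sub_mul_le_integral (h : IsYoungWith A a) {u v : ℝ} (hu : 0 ≤ u) (huv : u ≤ v) :
    (v - u) * a u ≤ ∫ s in u..v, a s := by
  have ⟨_, _, hmono, _⟩ := h
  simpa using intervalIntegral.integral_mono_on huv intervalIntegrable_const
    (h.intervalIntegrable hu (hu.trans huv)) fun x hx => hmono hu (hu.trans hx.1) hx.1

theorem strictMonoOn (h : IsYoungWith A a) : StrictMonoOn A (Ici 0) := by
  intro u (hu : 0 ≤ u) v _ huv
  have hm : 0 ≤ (u + v) / 2 := by linarith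
  have hAm := h.add_integral hu (show u ≤ (u + v) / 2 by linarith)
  have hAv := h.add_integral hm (show (u + v) / 2 ≤ v by linarith)
  have hIm := h.sub_mul_le_integral hu (show u ≤ (u + v) / 2 by linarith)
  have hIv := h.sub_mul_le_integral hm (show (u + v) / 2 ≤ v by linarith)
  have ham : 0 < a ((u + v) / 2) := h.2.1 _ (by linarith)
  nlinarith [h.density_nonneg hu]

theorem nonneg (h : IsYoungWith A a) {t : ℝ} (ht : 0 ≤ t) : 0 ≤ A t :=
  h.map_zero ▸ h.strictMonoOn.monotoneOn self_mem_Ici ht ht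

theorem pos (h : IsYoungWith A a) {t : ℝ} (ht : 0 < t) : 0 < A t :=
  h.map_zero ▸ h.strictMonoOn self_mem_Ici ht.le ht

theorem le_mul_of_le_one (h : IsYoungWith A a) {l u : ℝ} (hl : 0 < l) (hl1 : l ≤ 1)
    (hu : 0 ≤ u) : A (l * u) ≤ l * A u := by
  have ⟨_, _, hmono, _, _, hA⟩ := h
  have hlu : 0 ≤ l * u := mul_nonneg hl.le hu
  have hscale : A (l * u) = l * ∫ x in (0:ℝ)..u, a (l * x) := by
    rw [hA _ hlu, intervalIntegral.integral_comp_mul_left a hl.ne', mul_zero,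
      smul_eq_mul, ← mul_assoc, mul_inv_cancel₀ hl.ne', one_mul]
  have hcomp : IntervalIntegrable (fun x => a (l * x)) volume 0 u := by
    simpa [hl.ne'] using (h.intervalIntegrable le_rfl hlu).comp_mul_left (c := l)
  rw [hscale, hA u hu]
  refine mul_le_mul_of_nonneg_left (intervalIntegral.integral_mono_on hu hcomp
    (h.intervalIntegrable le_rfl hu) fun x hx => ?_) hl.le
  exact hmono (mul_nonneg hl.le hx.1) hx.1 (mul_le_of_le_one_left hx.1 hl1)

theorem continuousOn (h : IsYoungWith A a) : ContinuousOn A (Ici 0) := by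
  have ⟨_, _, _, _, _, hA⟩ := h
  intro x (hx : 0 ≤ x)
  have hx1 : 0 ≤ x + 1 := by linarith
  have hprim : ContinuousOn A (Icc 0 (x + 1)) := by
    have := intervalIntegral.continuousOn_primitive_interval'
      (h.intervalIntegrable le_rfl hx1) left_mem_uIcc
    rw [uIcc_of_le hx1] at this
    exact this.congr fun y hy => hA y hy.1
  refine (hprim x ⟨hx, by linarith⟩).mono_of_mem_nhdsWithin ?_
  rw [← Ici_inter_Iic]
  exact inter_mem_nhdsWithin _ (Iic_mem_nhds (by linarith))

theorem tendsto_atTop (h : IsYoungWith A a) : Tendsto A atTop atTop := by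
  have ⟨_, _, _, _, ha, _⟩ := h
  refine tendsto_atTop_mono' _ ?_ (ha.comp (tendsto_id.atTop_div_const two_pos))
  filter_upwards [eventually_ge_atTop (2:ℝ)] with u hu
  show a (u / 2) ≤ A u
  have hu2 : 0 ≤ u / 2 := by linarith
  have hAu := h.add_integral hu2 (show u / 2 ≤ u by linarith)
  have hI := h.sub_mul_le_integral hu2 (show u / 2 ≤ u by linarith)
  nlinarith [h.nonneg hu2, h.density_nonneg hu2]

end IsYoungWith

section Efun

variable {A a : ℝ → ℝ} {ξ : ℝ}

theorem Efun_eq_integral_Ioo_zero_one {t : ℝ} (ht : 0 < t) :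
    Efun A ξ t = |ξ|⁻¹ * ∫ s in Ioo 0 1, A (t * s) * s ^ (1/ξ - 1) := by
  rw [Efun, integral_Ioo_zero_mul_rpow A (1/ξ) ht, mul_assoc, ← mul_assoc (t ^ _),
    ← rpow_add ht]
  simp

theorem continuousOn_Efun (hint : ∀ t, IntegrableOn (fun s => A s * s ^ (1/ξ - 1)) (Ioo 0 t)) :
    ContinuousOn (Efun A ξ) (Ioi 0) :=
  (continuousOn_const.mul (continuousOn_id.rpow_const fun _ ht => Or.inl (ne_of_gt ht))).mul
    (continuousOn_integral_Ioo_zero hint)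

theorem Efun_strictMonoOn (hA : IsYoungWith A a) (hξ : ξ ≠ 0)
    (hint : ∀ t, IntegrableOn (fun s => A s * s ^ (1/ξ - 1)) (Ioo 0 t)) :
    StrictMonoOn (Efun A ξ) (Ioi 0) := by
  intro t₁ (ht₁ : 0 < t₁) t₂ (ht₂ : 0 < t₂) ht
  rw [Efun_eq_integral_Ioo_zero_one ht₁, Efun_eq_integral_Ioo_zero_one ht₂]
  refine mul_lt_mul_of_pos_left (setIntegral_lt_setIntegral_of_forall_lt measurableSet_Ioo
    (by simp) ((hint t₁).comp_mul_rpow_Ioo_zero_one ht₁)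
    ((hint t₂).comp_mul_rpow_Ioo_zero_one ht₂) fun s hs => ?_) (by positivity)
  have hA12 : A (t₁ * s) < A (t₂ * s) :=
    hA.strictMonoOn (mem_Ici.2 (by nlinarith [hs.1])) (mem_Ici.2 (by nlinarith [hs.1]))
      (mul_lt_mul_of_pos_right ht hs.1)
  exact mul_lt_mul_of_pos_right hA12 (rpow_pos_of_pos hs.1 _)

theorem Efun_pos (hA : IsYoungWith A a) (hξ : ξ ≠ 0)
    (hint : ∀ t, IntegrableOn (fun s => A s * s ^ (1/ξ - 1)) (Ioo 0 t)) {t : ℝ} (ht : 0 < t) :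
    0 < Efun A ξ t := by
  rw [Efun_eq_integral_Ioo_zero_one ht]
  refine mul_pos (by positivity) ?_
  simpa using setIntegral_lt_setIntegral_of_forall_lt (f := 0) measurableSet_Ioo (by simp)
    integrableOn_zero ((hint t).comp_mul_rpow_Ioo_zero_one ht)
    fun s hs => mul_pos (hA.pos (mul_pos ht hs.1)) (rpow_pos_of_pos hs.1 _)

theorem Efun_le_mul_Efun_one (hA : IsYoungWith A a)
    (hint : ∀ t, IntegrableOn (fun s => A s * s ^ (1/ξ - 1)) (Ioo 0 t)) {t : ℝ} (ht : 0 < t)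
    (ht1 : t ≤ 1) : Efun A ξ t ≤ t * Efun A ξ 1 := by
  rw [Efun_eq_integral_Ioo_zero_one ht, Efun_eq_integral_Ioo_zero_one one_pos,
    mul_left_comm t, ← integral_const_mul t]
  simp only [one_mul]
  refine mul_le_mul_of_nonneg_left (setIntegral_mono_on ((hint t).comp_mul_rpow_Ioo_zero_one ht)
    ((hint 1).const_mul t) measurableSet_Ioo fun s hs => ?_) (by positivity)
  rw [← mul_assoc]
  exact mul_le_mul_of_nonneg_right (hA.le_mul_of_le_one ht ht1 hs.1.le) (rpow_nonneg hs.1.le _)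

theorem tendsto_Efun_nhdsGT_zero (hA : IsYoungWith A a) (hξ : ξ ≠ 0)
    (hint : ∀ t, IntegrableOn (fun s => A s * s ^ (1/ξ - 1)) (Ioo 0 t)) :
    Tendsto (Efun A ξ) (𝓝[>] 0) (𝓝 0) := by
  have hupper : Tendsto (fun t => t * Efun A ξ 1) (𝓝[>] 0) (𝓝 0) := by
    simpa using tendsto_nhdsWithin_of_tendsto_nhds ((continuous_mul_const (Efun A ξ 1)).tendsto 0)
  refine tendsto_of_tendsto_of_tendsto_of_le_of_le' tendsto_const_nhds hupper ?_ ?_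
  · filter_upwards [self_mem_nhdsWithin] with t ht using (Efun_pos hA hξ hint ht).le
  · filter_upwards [Ioc_mem_nhdsGT zero_lt_one] with t ht
      using Efun_le_mul_Efun_one hA hint ht.1 ht.2

theorem mul_integral_rpow_le_Efun (hA : IsYoungWith A a)
    (hint : ∀ t, IntegrableOn (fun s => A s * s ^ (1/ξ - 1)) (Ioo 0 t)) {t : ℝ} (ht : 0 < t) :
    |ξ|⁻¹ * (A (t / 2) * ∫ s in Ioo (1/2) 1, s ^ (1/ξ - 1)) ≤ Efun A ξ t := by
  have hsub : Ioo (1/2 : ℝ) 1 ⊆ Ioo 0 1 := Ioo_subset_Ioo (by norm_num) le_rfl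
  have hG := (hint t).comp_mul_rpow_Ioo_zero_one ht
  rw [Efun_eq_integral_Ioo_zero_one ht, ← integral_const_mul]
  refine mul_le_mul_of_nonneg_left ?_ (by positivity)
  calc ∫ s in Ioo (1/2) 1, A (t / 2) * s ^ (1/ξ - 1)
      ≤ ∫ s in Ioo (1/2) 1, A (t * s) * s ^ (1/ξ - 1) := by
        refine setIntegral_mono_on ((integrableOn_Ioo_rpow_of_pos _ one_half_pos).const_mul _)
          (hG.mono_set hsub) measurableSet_Ioo fun s hs => ?_
        have hAs : A (t / 2) ≤ A (t * s) := hA.strictMonoOn.monotoneOn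
          (mem_Ici.2 (by positivity)) (mem_Ici.2 (by nlinarith [hs.1])) (by nlinarith [hs.1])
        exact mul_le_mul_of_nonneg_right hAs (rpow_nonneg (by linarith [hs.1]) _)
    _ ≤ ∫ s in Ioo 0 1, A (t * s) * s ^ (1/ξ - 1) := by
        refine setIntegral_mono_set hG ?_ hsub.eventuallyLE
        filter_upwards [ae_restrict_mem measurableSet_Ioo] with s hs
        exact mul_nonneg (hA.nonneg (by nlinarith [hs.1])) (rpow_nonneg hs.1.le _)

theorem tendsto_Efun_atTop (hA : IsYoungWith A a) (hξ : ξ ≠ 0)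
    (hint : ∀ t, IntegrableOn (fun s => A s * s ^ (1/ξ - 1)) (Ioo 0 t)) :
    Tendsto (Efun A ξ) atTop atTop := by
  have hC : 0 < ∫ s in Ioo (1/2 : ℝ) 1, s ^ (1/ξ - 1) := by
    simpa using setIntegral_lt_setIntegral_of_forall_lt (f := 0) measurableSet_Ioo (by norm_num)
      integrableOn_zero (integrableOn_Ioo_rpow_of_pos _ one_half_pos)
      fun s hs => rpow_pos_of_pos (one_half_pos.trans hs.1) _
  have hlower : Tendsto (fun t => |ξ|⁻¹ * (A (t / 2) * ∫ s in Ioo (1/2) 1, s ^ (1/ξ - 1)))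
      atTop atTop :=
    ((hA.tendsto_atTop.comp (tendsto_id.atTop_div_const two_pos)).atTop_mul_const hC)
      |>.const_mul_atTop (by positivity)
  refine tendsto_atTop_mono' _ ?_ hlower
  filter_upwards [eventually_gt_atTop 0] with t ht using mul_integral_rpow_le_Efun hA hint ht

end Efun

theorem statement0 (A : ℝ → ℝ) (hA : IsYoung A) (ξ : ℝ) (hξ : ξ ≠ 0)
    (c : ℝ) (hc : 0 < c)
    (hconv : MeasureTheory.IntegrableOn (fun s => A s * s ^ (1/ξ - 1)) (Set.Ioo 0 c)) :
    StrictMonoOn (Efun A ξ) (Set.Ioi 0) ∧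
    Efun A ξ '' Set.Ioi 0 = Set.Ioi 0 ∧
    (∀ t, 0 < t → Efun A ξ t = |ξ|⁻¹ * ∫ s in Set.Ioo (0:ℝ) 1, A (t * s) * s ^ (1/ξ - 1)) ∧
    Filter.Tendsto (Efun A ξ) (nhdsWithin 0 (Set.Ioi 0)) (nhds 0) ∧
    Filter.Tendsto (Efun A ξ) Filter.atTop Filter.atTop := by
  obtain ⟨a, ha⟩ := hA
  have hint : ∀ t, IntegrableOn (fun s => A s * s ^ (1/ξ - 1)) (Ioo 0 t) :=
    fun t => integrableOn_Ioo_zero_of_continuousOn_Ioi hconv hc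
      ((ha.continuousOn.mono Ioi_subset_Ici_self).mul
        (continuousOn_id.rpow_const fun _ hs => Or.inl (ne_of_gt hs)))
  have h0 := tendsto_Efun_nhdsGT_zero ha hξ hint
  have htop := tendsto_Efun_atTop ha hξ hint
  exact ⟨Efun_strictMonoOn ha hξ hint,
    image_Ioi_zero_eq_Ioi_zero (continuousOn_Efun hint) (fun _ ht => Efun_pos ha hξ hint ht)
      h0 htop,
    fun _ ht => Efun_eq_integral_Ioo_zero_one ht, h0, htop⟩
end
end

section
/- Let 0<α<1, β>0 with α+1/β≥1, and let φ be a quasiconcave function on [0,1). Define φ̄(t) := t^{β(1−α)} · sup_{t<s<1} φ(s) s^{β(α−1)} for t∈(0,1) and φ̄(0)=0. Then φ̄ is quasiconcave on [0,1), and the function t ↦ φ̄(t^{1/β}) t^{α} is quasiconcave on [0,1) and strictly increasing on (0,1). -/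
open MeasureTheory Filter Set Real Topology
open scoped ENNReal

noncomputable section

/-- A quasiconcave function on `[0,1)`: it vanishes exactly at `0`, is nonnegative and
nondecreasing, and `t ↦ φ(t)/t` is nonincreasing on `(0,1)`. -/
def QuasiconcaveOn01 (φ : ℝ → ℝ) : Prop :=
  φ 0 = 0 ∧ (∀ t ∈ Set.Ioo (0:ℝ) 1, 0 < φ t) ∧
  (∀ t ∈ Set.Ico (0:ℝ) 1, 0 ≤ φ t) ∧
  MonotoneOn φ (Set.Ioo 0 1) ∧
  AntitoneOn (fun t => φ t / t) (Set.Ioo 0 1)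

/-- `φ̄(t) = t^{β(1-α)} ⬝ sup_{t<s<1} φ(s) s^{β(α-1)}` (with `φ̄(0)=0`). -/
def phibar (α β : ℝ) (φ : ℝ → ℝ) (t : ℝ) : ℝ :=
  t ^ (β * (1 - α)) * sSup ((fun s => φ s * s ^ (β * (α - 1))) '' Set.Ioo t 1)

/-
`φ̄(t)/t = t^{γ-1} sup_{t<s<1} φ(s) s^{-γ}` with `γ = β(1-α) ∈ (0,1]` is a product of two
nonincreasing factors. For monotonicity of `φ̄`, a term `t₁^γ φ(s) s^{-γ}` with `t₁ < s ≤ t₂`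
is at most `φ(s) ≤ φ(t₂) ≤ φ̄(t₂)`, while the terms with `s > t₂` only grow when `t₁` is
replaced by `t₂`. Finally `φ̄(t^{1/β}) t^α` is the product of the nondecreasing `φ̄(t^{1/β})`
with the strictly increasing `t^α`, and dividing it by `t` leaves the nonincreasing
`sup_{t^{1/β}<s<1} φ(s) s^{-γ}`.
-/

lemma rpow_mem_Ioo_zero_one {t p : ℝ} (ht : t ∈ Ioo (0:ℝ) 1) (hp : 0 < p) :
    t ^ p ∈ Ioo (0:ℝ) 1 :=
  ⟨rpow_pos_of_pos ht.1 p, rpow_lt_one ht.1.le ht.2 hp⟩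

lemma rpow_mul_rpow_eq_one {t a b : ℝ} (ht : 0 < t) (hab : a + b = 0) : t ^ a * t ^ b = 1 := by
  rw [← rpow_add ht, hab, rpow_zero]

def tailSup (φ : ℝ → ℝ) (c t : ℝ) : ℝ :=
  sSup ((fun s => φ s * s ^ c) '' Ioo t 1)

namespace QuasiconcaveOn01

variable {φ f : ℝ → ℝ} {c t s : ℝ}

lemma of_pos (h0 : f 0 = 0) (hpos : ∀ t ∈ Ioo (0:ℝ) 1, 0 < f t)
    (hmono : MonotoneOn f (Ioo 0 1)) (hanti : AntitoneOn (fun t => f t / t) (Ioo 0 1)) :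
    QuasiconcaveOn01 f := by
  refine ⟨h0, hpos, fun t ht => ?_, hmono, hanti⟩
  rcases ht.1.eq_or_lt with rfl | h
  · exact h0.ge
  · exact (hpos t ⟨h, ht.2⟩).le

lemma le_div_self (hφ : QuasiconcaveOn01 φ) (ht : t ∈ Ioo (0:ℝ) 1) (hs : s ∈ Ioo t 1) :
    φ s ≤ φ t / t := by
  have hs0 : 0 < s := ht.1.trans hs.1
  calc φ s = φ s / s * s := (div_mul_cancel₀ _ hs0.ne').symm
    _ ≤ φ t / t * 1 :=
        mul_le_mul (hφ.2.2.2.2 ht ⟨hs0, hs.2⟩ hs.1.le) hs.2.le hs0.le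
          (div_nonneg (hφ.2.2.1 t ⟨ht.1.le, ht.2⟩) ht.1.le)
    _ = φ t / t := mul_one _

lemma bddAbove_tail (hφ : QuasiconcaveOn01 φ) (hc : c ≤ 0) (ht : t ∈ Ioo (0:ℝ) 1) :
    BddAbove ((fun s => φ s * s ^ c) '' Ioo t 1) := by
  refine ⟨φ t / t * t ^ c, ?_⟩
  rintro _ ⟨s, hs, rfl⟩
  exact mul_le_mul (hφ.le_div_self ht hs) (rpow_le_rpow_of_nonpos ht.1 hs.1.le hc)
    (rpow_nonneg (ht.1.trans hs.1).le c) (div_nonneg (hφ.2.2.1 t ⟨ht.1.le, ht.2⟩) ht.1.le)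

lemma le_tailSup (hφ : QuasiconcaveOn01 φ) (hc : c ≤ 0) (ht : t ∈ Ioo (0:ℝ) 1)
    (hs : s ∈ Ioo t 1) : φ s * s ^ c ≤ tailSup φ c t :=
  le_csSup (hφ.bddAbove_tail hc ht) (mem_image_of_mem _ hs)

lemma tailSup_pos (hφ : QuasiconcaveOn01 φ) (hc : c ≤ 0) (ht : t ∈ Ioo (0:ℝ) 1) :
    0 < tailSup φ c t := by
  obtain ⟨s, hs⟩ := nonempty_Ioo.2 ht.2
  have hs0 : 0 < s := ht.1.trans hs.1
  exact (mul_pos (hφ.2.1 s ⟨hs0, hs.2⟩) (rpow_pos_of_pos hs0 c)).trans_le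
    (hφ.le_tailSup hc ht hs)

lemma antitoneOn_tailSup (hφ : QuasiconcaveOn01 φ) (hc : c ≤ 0) :
    AntitoneOn (tailSup φ c) (Ioo 0 1) := fun _ ht₁ _ ht₂ h =>
  csSup_le_csSup (hφ.bddAbove_tail hc ht₁) ((nonempty_Ioo.2 ht₂.2).image _)
    (image_mono (Ioo_subset_Ioo_left h))

lemma mul_rpow_le_tailSup (hφ : QuasiconcaveOn01 φ) (hc : c ≤ 0) (ht : t ∈ Ioo (0:ℝ) 1) :
    φ t * t ^ c ≤ tailSup φ c t := by
  have hlim : Tendsto (fun s => φ t * s ^ c) (𝓝[>] t) (𝓝 (φ t * t ^ c)) :=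
    ((continuousAt_const.mul (continuousAt_rpow_const t c (Or.inl ht.1.ne'))).tendsto).mono_left
      nhdsWithin_le_nhds
  refine le_of_tendsto hlim ?_
  filter_upwards [Ioo_mem_nhdsGT ht.2] with s hs
  have hs0 : 0 < s := ht.1.trans hs.1
  calc φ t * s ^ c ≤ φ s * s ^ c :=
        mul_le_mul_of_nonneg_right (hφ.2.2.2.1 ht ⟨hs0, hs.2⟩ hs.1.le) (rpow_nonneg hs0.le c)
    _ ≤ tailSup φ c t := hφ.le_tailSup hc ht hs

end QuasiconcaveOn01

section Phibar

variable {α β : ℝ} {φ : ℝ → ℝ} {t : ℝ}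

lemma phibar_eq_mul_tailSup :
    phibar α β φ t = t ^ (β * (1 - α)) * tailSup φ (β * (α - 1)) t := rfl

lemma phibar_le_of_forall_le {B : ℝ} (ht : t ∈ Ioo (0:ℝ) 1)
    (h : ∀ s ∈ Ioo t 1, t ^ (β * (1 - α)) * (φ s * s ^ (β * (α - 1))) ≤ B) :
    phibar α β φ t ≤ B := by
  have hpow : 0 < t ^ (β * (1 - α)) := rpow_pos_of_pos ht.1 _
  rw [phibar, ← le_div_iff₀' hpow]
  refine csSup_le ((nonempty_Ioo.2 ht.2).image _) ?_
  rintro _ ⟨s, hs, rfl⟩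
  rw [le_div_iff₀' hpow]
  exact h s hs

lemma phibar_rpow_one_div_mul_rpow (hβ : β ≠ 0) (ht : 0 < t) :
    phibar α β φ (t ^ (1 / β)) * t ^ α
      = t * tailSup φ (β * (α - 1)) (t ^ (1 / β)) := by
  rw [phibar_eq_mul_tailSup, ← rpow_mul ht.le,
    show 1 / β * (β * (1 - α)) = 1 - α by field_simp, mul_right_comm, ← rpow_add ht,
    sub_add_cancel, rpow_one]

namespace QuasiconcaveOn01

lemma le_phibar (hφ : QuasiconcaveOn01 φ) (hγ : 0 ≤ β * (1 - α)) (ht : t ∈ Ioo (0:ℝ) 1) :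
    φ t ≤ phibar α β φ t :=
  calc φ t = t ^ (β * (1 - α)) * (φ t * t ^ (β * (α - 1))) := by
        rw [mul_left_comm, rpow_mul_rpow_eq_one ht.1 (by ring), mul_one]
    _ ≤ phibar α β φ t :=
        mul_le_mul_of_nonneg_left (hφ.mul_rpow_le_tailSup (by linarith) ht) (rpow_nonneg ht.1.le _)

lemma phibar_pos (hφ : QuasiconcaveOn01 φ) (hγ : 0 ≤ β * (1 - α))
    (ht : t ∈ Ioo (0:ℝ) 1) : 0 < phibar α β φ t :=
  mul_pos (rpow_pos_of_pos ht.1 _) (hφ.tailSup_pos (by linarith) ht)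

lemma monotoneOn_phibar (hφ : QuasiconcaveOn01 φ) (hγ : 0 ≤ β * (1 - α)) :
    MonotoneOn (phibar α β φ) (Ioo 0 1) := by
  intro t₁ ht₁ t₂ ht₂ h
  refine phibar_le_of_forall_le ht₁ fun s hs => ?_
  have hs₀ : 0 < s := ht₁.1.trans hs.1
  have hterm : 0 ≤ φ s * s ^ (β * (α - 1)) :=
    mul_nonneg (hφ.2.2.1 s ⟨hs₀.le, hs.2⟩) (rpow_nonneg hs₀.le _)
  rcases le_or_gt s t₂ with hst₂ | hst₂
  · calc t₁ ^ (β * (1 - α)) * (φ s * s ^ (β * (α - 1)))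
          ≤ s ^ (β * (1 - α)) * (φ s * s ^ (β * (α - 1))) :=
            mul_le_mul_of_nonneg_right (rpow_le_rpow ht₁.1.le hs.1.le hγ) hterm
      _ = φ s := by rw [mul_left_comm, rpow_mul_rpow_eq_one hs₀ (by ring), mul_one]
      _ ≤ φ t₂ := hφ.2.2.2.1 ⟨hs₀, hs.2⟩ ht₂ hst₂
      _ ≤ phibar α β φ t₂ := hφ.le_phibar hγ ht₂
  · calc t₁ ^ (β * (1 - α)) * (φ s * s ^ (β * (α - 1)))
          ≤ t₂ ^ (β * (1 - α)) * (φ s * s ^ (β * (α - 1))) :=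
            mul_le_mul_of_nonneg_right (rpow_le_rpow ht₁.1.le h hγ) hterm
      _ ≤ phibar α β φ t₂ :=
            mul_le_mul_of_nonneg_left (hφ.le_tailSup (by linarith) ht₂ ⟨hst₂, hs.2⟩)
              (rpow_nonneg ht₂.1.le _)

lemma antitoneOn_phibar_div (hφ : QuasiconcaveOn01 φ) (hγ : 0 ≤ β * (1 - α))
    (hγ₁ : β * (1 - α) ≤ 1) : AntitoneOn (fun t => phibar α β φ t / t) (Ioo 0 1) := by
  have h : ∀ t ∈ Ioo (0:ℝ) 1,
      phibar α β φ t / t = t ^ (β * (1 - α) - 1) * tailSup φ (β * (α - 1)) t := by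
    intro t ht
    rw [phibar_eq_mul_tailSup, rpow_sub ht.1, rpow_one]
    ring
  intro t₁ ht₁ t₂ ht₂ h₁₂
  simp only [h t₁ ht₁, h t₂ ht₂]
  have hc : β * (α - 1) ≤ 0 := by linarith
  exact mul_le_mul (rpow_le_rpow_of_nonpos ht₁.1 h₁₂ (by linarith))
    (hφ.antitoneOn_tailSup hc ht₁ ht₂ h₁₂) (hφ.tailSup_pos hc ht₂).le
    (rpow_nonneg ht₁.1.le _)

end QuasiconcaveOn01

lemma quasiconcaveOn01_phibar (hφ : QuasiconcaveOn01 φ) (hγ : 0 < β * (1 - α))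
    (hγ₁ : β * (1 - α) ≤ 1) : QuasiconcaveOn01 (phibar α β φ) :=
  QuasiconcaveOn01.of_pos (by rw [phibar, zero_rpow hγ.ne', zero_mul])
    (fun _ ht => hφ.phibar_pos hγ.le ht) (hφ.monotoneOn_phibar hγ.le)
    (hφ.antitoneOn_phibar_div hγ.le hγ₁)

lemma strictMonoOn_phibar_rpow_mul_rpow (hφ : QuasiconcaveOn01 φ)
    (hα : 0 < α) (hβ : 0 < β) (hγ : 0 ≤ β * (1 - α)) :
    StrictMonoOn (fun t => phibar α β φ (t ^ (1 / β)) * t ^ α) (Ioo 0 1) := by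
  intro t₁ ht₁ t₂ ht₂ h
  have hβ' : 0 < 1 / β := one_div_pos.2 hβ
  exact mul_lt_mul'
    (hφ.monotoneOn_phibar hγ (rpow_mem_Ioo_zero_one ht₁ hβ') (rpow_mem_Ioo_zero_one ht₂ hβ')
      (rpow_le_rpow ht₁.1.le h.le hβ'.le))
    (rpow_lt_rpow ht₁.1.le h hα) (rpow_nonneg ht₁.1.le α)
    (hφ.phibar_pos hγ (rpow_mem_Ioo_zero_one ht₂ hβ'))

lemma quasiconcaveOn01_phibar_rpow_mul_rpow (hφ : QuasiconcaveOn01 φ) (hα : 0 < α)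
    (hβ : 0 < β) (hγ : 0 ≤ β * (1 - α)) :
    QuasiconcaveOn01 (fun t => phibar α β φ (t ^ (1 / β)) * t ^ α) := by
  have hβ' : 0 < 1 / β := one_div_pos.2 hβ
  have hdiv : ∀ t ∈ Ioo (0:ℝ) 1,
      phibar α β φ (t ^ (1 / β)) * t ^ α / t = tailSup φ (β * (α - 1)) (t ^ (1 / β)) := by
    intro t ht
    rw [phibar_rpow_one_div_mul_rpow hβ.ne' ht.1, mul_div_cancel_left₀ _ ht.1.ne']
  refine QuasiconcaveOn01.of_pos (by simp only [zero_rpow hα.ne', mul_zero])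
    (fun t ht => mul_pos (hφ.phibar_pos hγ (rpow_mem_Ioo_zero_one ht hβ'))
      (rpow_pos_of_pos ht.1 α))
    (strictMonoOn_phibar_rpow_mul_rpow hφ hα hβ hγ).monotoneOn fun t₁ ht₁ t₂ ht₂ h => ?_
  simp only [hdiv t₁ ht₁, hdiv t₂ ht₂]
  exact hφ.antitoneOn_tailSup (by linarith) (rpow_mem_Ioo_zero_one ht₁ hβ')
    (rpow_mem_Ioo_zero_one ht₂ hβ') (rpow_le_rpow ht₁.1.le h hβ'.le)

end Phibar

theorem statement4 (α β : ℝ) (hα : 0 < α) (hα1 : α < 1) (hβ : 0 < β)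
    (hαβ : 1 ≤ α + 1 / β) (φ : ℝ → ℝ) (hφ : QuasiconcaveOn01 φ) :
    QuasiconcaveOn01 (phibar α β φ) ∧
    QuasiconcaveOn01 (fun t => phibar α β φ (t ^ (1/β)) * t ^ α) ∧
    StrictMonoOn (fun t => phibar α β φ (t ^ (1/β)) * t ^ α) (Set.Ioo 0 1) := by
  have hγ : 0 < β * (1 - α) := mul_pos hβ (by linarith)
  have hγ₁ : β * (1 - α) ≤ 1 := (le_div_iff₀' hβ).1 (by linarith)
  exact ⟨quasiconcaveOn01_phibar hφ hγ hγ₁,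
    quasiconcaveOn01_phibar_rpow_mul_rpow hφ hα hβ hγ.le,
    strictMonoOn_phibar_rpow_mul_rpow hφ hα hβ hγ.le⟩
end
end

section
/- Let u be a continuous strictly increasing bijection of (0,1) onto (0,1) that is quasiconcave (i.e., u(t)/t is nonincreasing on (0,1)) and satisfies lim_{t→0+} u(t)/t = ∞. Define b(s)=s for s∈[0,1], b(s)=1/(s·u^{−1}(1/s)) for s>1, and B(t) := ∫_0^t b(s) ds. Then B is a Young function (b is nondecreasing, right-continuous, positive on (0,∞), and b(s)→∞ as s→∞), and B(t) ≤ 1/u^{−1}(1/t) ≤ B(2t) for every t∈(1,∞); consequently u(y)/2 ≤ 1/B^{−1}(1/y) ≤ u(y) for every y∈(0,1), where B^{−1} is the inverse of B on [0,∞). In particular, the fundamental function t ↦ 1/B^{−1}(1/t) of the Orlicz space L^B(0,1) is equivalent to u on (0,1). -/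
open MeasureTheory Filter Set Real Topology
open scoped ENNReal

noncomputable section

/-- The density `b`: `b(s) = s` for `s ≤ 1` and `b(s) = 1/(s ⬝ u⁻¹(1/s))` for `s > 1`. -/
def bfun (uinv : ℝ → ℝ) (s : ℝ) : ℝ :=
  if s ≤ 1 then s else 1 / (s * uinv (1 / s))

/-- `B(t) = ∫₀ᵗ b(s) ds`. -/
def Bfun (uinv : ℝ → ℝ) (t : ℝ) : ℝ :=
  ∫ s in (0:ℝ)..t, bfun uinv s

/-- The (generalized) inverse of `B` on `[0,∞)`. -/
def geninv (B : ℝ → ℝ) (t : ℝ) : ℝ :=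
  sInf {s : ℝ | 0 ≤ s ∧ t ≤ B s}

/-!
For `s > 1` put `x = u⁻¹(1/s)`; then `b(s) = u(x)/x`, so quasiconcavity of `u` makes `b`
nondecreasing and `u(x)/x → ∞` makes it unbounded, while `t b(t) = 1/u⁻¹(1/t)`. For a
nondecreasing density, `B(t) ≤ t b(t) ≤ ∫_t^{2t} b ≤ B(2t)`. Since `b > 0`, `B` is strictly
increasing, so with `t = 1/u(y)` these bounds pin `B⁻¹(1/y)` between `t` and `2t`.
-/

/-- The properties of `u⁻¹`, for `u` as in the theorem, on which the construction of `b` rests. -/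
structure IsQuasiconvexUnitMap (v : ℝ → ℝ) : Prop where
  monotoneOn : MonotoneOn v (Ioo 0 1)
  image_eq : v '' Ioo 0 1 = Ioo 0 1
  monotoneOn_div : MonotoneOn (fun t => v t / t) (Ioo 0 1)

namespace IsQuasiconvexUnitMap

variable {v : ℝ → ℝ}

lemma mapsTo (hv : IsQuasiconvexUnitMap v) : MapsTo v (Ioo 0 1) (Ioo 0 1) :=
  fun _ ht => hv.image_eq.subset (mem_image_of_mem v ht)

lemma continuousAt (hv : IsQuasiconvexUnitMap v) {t : ℝ} (ht : t ∈ Ioo 0 1) :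
    ContinuousAt v t :=
  continuousAt_of_monotoneOn_of_image_mem_nhds hv.monotoneOn (isOpen_Ioo.mem_nhds ht)
    (by rw [hv.image_eq]; exact isOpen_Ioo.mem_nhds (hv.mapsTo ht))

lemma tendsto_nhdsLT_one (hv : IsQuasiconvexUnitMap v) : Tendsto v (𝓝[<] 1) (𝓝 1) := by
  have h := hv.monotoneOn.tendsto_nhdsWithin_Ioo_left (nonempty_Ioo.2 one_pos)
    ⟨1, by rw [hv.image_eq]; exact fun _ hx => hx.2.le⟩
  rwa [hv.image_eq, csSup_Ioo one_pos] at h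

lemma le_self (hv : IsQuasiconvexUnitMap v) {t : ℝ} (ht : t ∈ Ioo 0 1) : v t ≤ t := by
  have hlim : Tendsto (fun s => v s / s) (𝓝[<] 1) (𝓝 1) := by
    have h := hv.tendsto_nhdsLT_one.div (tendsto_id.mono_left nhdsWithin_le_nhds) one_ne_zero
    rwa [div_one] at h
  have hratio : v t / t ≤ 1 := ge_of_tendsto hlim <| by
    filter_upwards [Ioo_mem_nhdsLT ht.2] with s hs
    exact hv.monotoneOn_div ht ⟨ht.1.trans hs.1, hs.2⟩ hs.1.le
  rwa [div_le_one ht.1] at hratio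

end IsQuasiconvexUnitMap

section Density

variable {uinv : ℝ → ℝ} {s : ℝ}

lemma one_div_mem_Ioo (hs : 1 < s) : 1 / s ∈ Ioo (0 : ℝ) 1 :=
  ⟨by positivity, (div_lt_one (by positivity)).2 hs⟩

lemma bfun_of_le (hs : s ≤ 1) : bfun uinv s = s := if_pos hs

lemma bfun_of_one_lt (hs : 1 < s) : bfun uinv s = 1 / (s * uinv (1 / s)) := if_neg hs.not_ge

lemma mul_bfun_of_one_lt (hs : 1 < s) : s * bfun uinv s = 1 / uinv (1 / s) := by
  rw [bfun_of_one_lt hs, mul_one_div, div_mul_cancel_left₀ (by positivity), inv_eq_one_div]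

lemma one_le_bfun (hv : IsQuasiconvexUnitMap uinv) (hs : 1 ≤ s) : 1 ≤ bfun uinv s := by
  rcases hs.eq_or_lt with rfl | hs
  · rw [bfun_of_le le_rfl]
  have ht := one_div_mem_Ioo hs
  have hpos := (hv.mapsTo ht).1
  rw [bfun_of_one_lt hs, le_div_iff₀ (by positivity), one_mul]
  calc s * uinv (1 / s) ≤ s * (1 / s) := by gcongr; exact hv.le_self ht
    _ = 1 := mul_one_div_cancel (by positivity)

lemma bfun_pos (hv : IsQuasiconvexUnitMap uinv) (hs : 0 < s) : 0 < bfun uinv s := by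
  rcases le_or_gt s 1 with hs1 | hs1
  · rwa [bfun_of_le hs1]
  · exact one_pos.trans_le (one_le_bfun hv hs1.le)

lemma monotoneOn_bfun (hv : IsQuasiconvexUnitMap uinv) : MonotoneOn (bfun uinv) (Ici 0) := by
  intro s₁ _ s₂ _ h
  rcases le_or_gt s₂ 1 with h₂ | h₂
  · rwa [bfun_of_le (h.trans h₂), bfun_of_le h₂]
  rcases le_or_gt s₁ 1 with h₁ | h₁
  · rw [bfun_of_le h₁]
    exact h₁.trans (one_le_bfun hv h₂.le)
  -- `s * u⁻¹(1/s)` is the ratio `u⁻¹(t)/t` at `t = 1/s`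
  have hratio := hv.monotoneOn_div (one_div_mem_Ioo h₂) (one_div_mem_Ioo h₁)
    (one_div_le_one_div_of_le (by positivity) h)
  simp only [div_div_eq_mul_div, div_one] at hratio
  rw [bfun_of_one_lt h₁, bfun_of_one_lt h₂, mul_comm s₁, mul_comm s₂]
  have := (hv.mapsTo (one_div_mem_Ioo h₂)).1
  exact one_div_le_one_div_of_le (by positivity) hratio

lemma tendsto_one_div_nhdsGT_one : Tendsto (fun x : ℝ => 1 / x) (𝓝[>] 1) (𝓝[<] 1) := by
  refine tendsto_nhdsWithin_iff.2 ⟨?_, ?_⟩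
  · have h : ContinuousAt (fun x : ℝ => 1 / x) 1 :=
      continuousAt_const.div continuousAt_id one_ne_zero
    simpa using h.tendsto.mono_left nhdsWithin_le_nhds
  · filter_upwards [self_mem_nhdsWithin] with x hx using (one_div_mem_Ioo hx).2

lemma continuousWithinAt_bfun (hv : IsQuasiconvexUnitMap uinv) :
    ContinuousWithinAt (bfun uinv) (Ici s) s := by
  rcases lt_or_ge s 1 with hs1 | hs1
  · refine (continuousAt_id.congr ?_).continuousWithinAt
    filter_upwards [Iio_mem_nhds hs1] with x hx using (bfun_of_le hx.le).symm
  rw [← continuousWithinAt_Ioi_iff_Ici]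
  have hden : Tendsto (fun x => x * uinv (1 / x)) (𝓝[>] s) (𝓝 (1 / bfun uinv s)) := by
    rcases hs1.eq_or_lt with rfl | hs1
    · simpa [bfun_of_le] using (tendsto_id.mono_left nhdsWithin_le_nhds).mul
        (hv.tendsto_nhdsLT_one.comp tendsto_one_div_nhdsGT_one)
    · rw [bfun_of_one_lt hs1, one_div_one_div]
      exact ((continuousAt_id.mul ((hv.continuousAt (one_div_mem_Ioo hs1)).comp
        (continuousAt_const.div continuousAt_id (by positivity)))).tendsto).mono_left
        nhdsWithin_le_nhds
  have hne : 1 / bfun uinv s ≠ 0 := (one_div_pos.2 (one_pos.trans_le (one_le_bfun hv hs1))).ne'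
  have h := (tendsto_const_nhds (x := (1 : ℝ))).div hden hne
  rw [one_div_one_div] at h
  refine h.congr' ?_
  filter_upwards [self_mem_nhdsWithin] with x hx using (bfun_of_one_lt (hs1.trans_lt hx)).symm

lemma tendsto_bfun_atTop (hlim : Tendsto (fun t => t / uinv t) (𝓝[>] 0) atTop) :
    Tendsto (bfun uinv) atTop atTop := by
  refine (hlim.comp tendsto_inv_atTop_nhdsGT_zero).congr' ?_
  filter_upwards [eventually_gt_atTop 1] with s hs
  rw [Function.comp_apply, bfun_of_one_lt hs, ← one_div, div_div]

end Density

section MonotoneDensity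

variable {a : ℝ → ℝ} {t : ℝ}

lemma MonotoneOn.intervalIntegrable_of_nonneg (ha : MonotoneOn a (Ici 0)) {x y : ℝ}
    (hx : 0 ≤ x) (hy : 0 ≤ y) : IntervalIntegrable a volume x y :=
  (ha.mono fun _ hz => (le_min hx hy).trans hz.1).intervalIntegrable

lemma integral_le_mul_of_monotoneOn (ha : MonotoneOn a (Ici 0)) (ht : 0 ≤ t) :
    ∫ s in (0 : ℝ)..t, a s ≤ t * a t := by
  simpa using intervalIntegral.integral_mono_on ht (ha.intervalIntegrable_of_nonneg le_rfl ht)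
    intervalIntegrable_const fun s hs => ha hs.1 ht hs.2

lemma mul_le_integral_of_monotoneOn (ha : MonotoneOn a (Ici 0)) (ha0 : 0 ≤ a 0) (ht : 0 ≤ t) :
    t * a t ≤ ∫ s in (0 : ℝ)..2 * t, a s := by
  have ht2 : 0 ≤ 2 * t := by positivity
  have hhead : 0 ≤ ∫ s in (0 : ℝ)..t, a s :=
    intervalIntegral.integral_nonneg ht fun s hs => ha0.trans (ha self_mem_Ici hs.1 hs.1)
  have htail : t * a t ≤ ∫ s in t..2 * t, a s := by
    simpa [two_mul] using intervalIntegral.integral_mono_on (by linarith)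
      intervalIntegrable_const (ha.intervalIntegrable_of_nonneg ht ht2)
      fun s hs => ha ht (ht.trans hs.1) hs.1
  rw [← intervalIntegral.integral_add_adjacent_intervals
    (ha.intervalIntegrable_of_nonneg le_rfl ht) (ha.intervalIntegrable_of_nonneg ht ht2)]
  linarith

lemma strictMonoOn_integral_of_pos (ha : MonotoneOn a (Ici 0)) (hpos : ∀ s, 0 < s → 0 < a s) :
    StrictMonoOn (fun t => ∫ s in (0 : ℝ)..t, a s) (Ici 0) := by
  intro x hx y hy hxy
  dsimp only
  have hint := ha.intervalIntegrable_of_nonneg hx hy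
  have := intervalIntegral.intervalIntegral_pos_of_pos_on hint
    (fun s hs => hpos s (lt_of_le_of_lt hx hs.1)) hxy
  rw [← intervalIntegral.integral_add_adjacent_intervals
    (ha.intervalIntegrable_of_nonneg le_rfl hx) hint]
  linarith

end MonotoneDensity

lemma geninv_mem_Icc {B : ℝ → ℝ} (hB : StrictMonoOn B (Ici 0)) {a c y : ℝ} (ha : 0 ≤ a)
    (hc : 0 ≤ c) (hay : B a ≤ y) (hyc : y ≤ B c) : geninv B y ∈ Icc a c := by
  have hmem : c ∈ {s | 0 ≤ s ∧ y ≤ B s} := ⟨hc, hyc⟩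
  refine ⟨le_csInf ⟨c, hmem⟩ fun s hs => ?_, csInf_le ⟨0, fun s hs => hs.1⟩ hmem⟩
  by_contra! hsa
  exact (hB hs.1 ha hsa).not_ge (hay.trans hs.2)

section Inverse

variable {u uinv : ℝ → ℝ}

lemma isQuasiconvexUnitMap_of_inverse (hu_mono : StrictMonoOn u (Ioo 0 1))
    (hu_onto : u '' Ioo 0 1 = Ioo 0 1) (hu_qc : AntitoneOn (fun t => u t / t) (Ioo 0 1))
    (huinv : ∀ t ∈ Ioo (0:ℝ) 1, uinv t ∈ Ioo (0:ℝ) 1 ∧ u (uinv t) = t)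
    (huinv' : ∀ t ∈ Ioo (0:ℝ) 1, uinv (u t) = t) : IsQuasiconvexUnitMap uinv := by
  have hmono : MonotoneOn uinv (Ioo 0 1) := fun t₁ h₁ t₂ h₂ h => by
    rwa [← hu_mono.le_iff_le (huinv t₁ h₁).1 (huinv t₂ h₂).1, (huinv t₁ h₁).2, (huinv t₂ h₂).2]
  refine ⟨hmono, ?_, fun t₁ h₁ t₂ h₂ h => ?_⟩
  · refine Subset.antisymm ?_ fun x hx => ⟨u x, hu_onto ▸ mem_image_of_mem u hx, huinv' x hx⟩
    rintro _ ⟨t, ht, rfl⟩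
    exact (huinv t ht).1
  · obtain ⟨hx₁, he₁⟩ := huinv t₁ h₁
    obtain ⟨hx₂, he₂⟩ := huinv t₂ h₂
    have hq := hu_qc hx₁ hx₂ (hmono h₁ h₂ h)
    simp only [he₁, he₂] at hq
    simpa only [inv_div] using inv_anti₀ (div_pos h₂.1 hx₂.1) hq

lemma tendsto_div_uinv (hu_lim : Tendsto (fun t => u t / t) (𝓝[>] 0) atTop)
    (hv : IsQuasiconvexUnitMap uinv) (huinv : ∀ t ∈ Ioo (0:ℝ) 1, u (uinv t) = t) :
    Tendsto (fun t => t / uinv t) (𝓝[>] 0) atTop := by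
  have hnear : ∀ᶠ t in 𝓝[>] (0 : ℝ), t ∈ Ioo (0 : ℝ) 1 := Ioo_mem_nhdsGT one_pos
  have h0 : Tendsto uinv (𝓝[>] 0) (𝓝[>] 0) := by
    refine tendsto_nhdsWithin_iff.2 ⟨?_, hnear.mono fun t ht => (hv.mapsTo ht).1⟩
    refine tendsto_of_tendsto_of_tendsto_of_le_of_le' tendsto_const_nhds
      (tendsto_id.mono_left nhdsWithin_le_nhds) ?_ ?_
    · exact hnear.mono fun t ht => (hv.mapsTo ht).1.le
    · exact hnear.mono fun t ht => hv.le_self ht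
  refine (hu_lim.comp h0).congr' ?_
  filter_upwards [hnear] with t ht
  rw [Function.comp_apply, huinv t ht]

end Inverse

theorem statement5_general (u uinv : ℝ → ℝ)
    (hu_mono : StrictMonoOn u (Set.Ioo 0 1))
    (hu_onto : u '' Set.Ioo 0 1 = Set.Ioo 0 1)
    (hu_qc : AntitoneOn (fun t => u t / t) (Set.Ioo 0 1))
    (hu_lim : Filter.Tendsto (fun t => u t / t) (nhdsWithin 0 (Set.Ioi 0)) Filter.atTop)
    (huinv : ∀ t ∈ Set.Ioo (0:ℝ) 1, uinv t ∈ Set.Ioo (0:ℝ) 1 ∧ u (uinv t) = t)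
    (huinv' : ∀ t ∈ Set.Ioo (0:ℝ) 1, uinv (u t) = t) :
    IsYoungWith (Bfun uinv) (bfun uinv) ∧
    (∀ t, 1 < t →
      Bfun uinv t ≤ 1 / uinv (1 / t) ∧ 1 / uinv (1 / t) ≤ Bfun uinv (2 * t)) ∧
    (∀ y ∈ Set.Ioo (0:ℝ) 1,
      u y / 2 ≤ 1 / geninv (Bfun uinv) (1 / y) ∧ 1 / geninv (Bfun uinv) (1 / y) ≤ u y) := by
  have hv := isQuasiconvexUnitMap_of_inverse hu_mono hu_onto hu_qc huinv huinv'
  have hb_mono := monotoneOn_bfun hv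
  have hb0 : bfun uinv 0 = 0 := bfun_of_le zero_le_one
  have hB_bounds : ∀ t, 1 < t →
      Bfun uinv t ≤ 1 / uinv (1 / t) ∧ 1 / uinv (1 / t) ≤ Bfun uinv (2 * t) := fun t ht => by
    rw [← mul_bfun_of_one_lt ht]
    exact ⟨integral_le_mul_of_monotoneOn hb_mono (by linarith),
      mul_le_integral_of_monotoneOn hb_mono hb0.ge (by linarith)⟩
  refine ⟨⟨hb0, fun s hs => bfun_pos hv hs, hb_mono, fun s _ => continuousWithinAt_bfun hv,
    tendsto_bfun_atTop (tendsto_div_uinv hu_lim hv fun t ht => (huinv t ht).2), fun t _ => rfl⟩,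
    hB_bounds, fun y hy => ?_⟩
  have huy : u y ∈ Ioo 0 1 := hu_onto ▸ mem_image_of_mem u hy
  have ht : 1 < 1 / u y := one_lt_one_div huy.1 huy.2
  obtain ⟨hlow, hup⟩ := hB_bounds _ ht
  rw [one_div_one_div, huinv' y hy] at hlow hup
  obtain ⟨hG₁, hG₂⟩ := geninv_mem_Icc (strictMonoOn_integral_of_pos hb_mono fun s => bfun_pos hv)
    (by positivity) (by positivity) hlow hup
  have hG : 0 < geninv (Bfun uinv) (1 / y) := lt_of_lt_of_le (by positivity) hG₁
  constructor
  · calc u y / 2 = 1 / (2 * (1 / u y)) := by field_simp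
      _ ≤ 1 / geninv (Bfun uinv) (1 / y) := one_div_le_one_div_of_le hG hG₂
  · calc 1 / geninv (Bfun uinv) (1 / y) ≤ 1 / (1 / u y) := one_div_le_one_div_of_le (by positivity) hG₁
      _ = u y := one_div_one_div _

theorem statement5 (u uinv : ℝ → ℝ)
    (hu_cont : ContinuousOn u (Set.Ioo 0 1))
    (hu_mono : StrictMonoOn u (Set.Ioo 0 1))
    (hu_onto : u '' Set.Ioo 0 1 = Set.Ioo 0 1)
    (hu_qc : AntitoneOn (fun t => u t / t) (Set.Ioo 0 1))
    (hu_lim : Filter.Tendsto (fun t => u t / t) (nhdsWithin 0 (Set.Ioi 0)) Filter.atTop)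
    (huinv : ∀ t ∈ Set.Ioo (0:ℝ) 1, uinv t ∈ Set.Ioo (0:ℝ) 1 ∧ u (uinv t) = t)
    (huinv' : ∀ t ∈ Set.Ioo (0:ℝ) 1, uinv (u t) = t) :
    IsYoungWith (Bfun uinv) (bfun uinv) ∧
    (∀ t, 1 < t →
      Bfun uinv t ≤ 1 / uinv (1 / t) ∧ 1 / uinv (1 / t) ≤ Bfun uinv (2 * t)) ∧
    (∀ y ∈ Set.Ioo (0:ℝ) 1,
      u y / 2 ≤ 1 / geninv (Bfun uinv) (1 / y) ∧ 1 / geninv (Bfun uinv) (1 / y) ≤ u y) :=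
  statement5_general u uinv hu_mono hu_onto hu_qc hu_lim huinv huinv'
end
end

section
/- Let u be a continuous strictly increasing bijection of (0,1) onto (0,1) that is quasiconcave (i.e., u(t)/t is nonincreasing on (0,1)) and satisfies lim_{t→0+} u(t)/t = ∞. Define b(s)=s for s∈[0,1], b(s)=1/(s·u^{−1}(1/s)) for s>1, B(t) := ∫_0^t b(s) ds, and let B̃(t) := sup_{s>0}(st − B(s)) be the complementary Young function of B. Then (1/2)·t·u(1/t) ≤ B̃^{−1}(t) ≤ 2·t·u(1/t) for every t∈(1,∞), where B̃^{−1} is the (generalized) inverse of B̃. -/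
/-!
Put `s₀ = 1/u(1/t)`, so that `b(s₀) = t u(1/t)` and `s₀ b(s₀) = t`. Since `b` is nondecreasing,
`B(s) ≥ (s - s₀) b(s₀)` for `s ≥ s₀`, which gives Young's inequality `B̃(τ) ≤ s₀ τ < t` for
`τ < b(s₀)`; hence `B̃⁻¹(t) ≥ t u(1/t)`. Conversely, testing the supremum defining `B̃(2 b(s₀))`
at `s₀` and using `B(s₀) ≤ 1/2 + (s₀ - 1) b(s₀) ≤ t` gives `B̃(2 b(s₀)) ≥ t`.
Quasiconcavity forces `u(y) ≥ y`, which makes `b` nondecreasing across `1` and `b(s₀) ≥ 1`;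
`u(y)/y → ∞` makes `b` unbounded, so that `B̃` is finite.
-/

open MeasureTheory Filter Set Real Topology
open scoped ENNReal

noncomputable section

/-- The complementary Young function `Ã(t) = sup_{s>0} (st - A(s))`. -/
def conjYoung (A : ℝ → ℝ) (t : ℝ) : ℝ :=
  sSup ((fun s => s * t - A s) '' Set.Ioi 0)

section Conjugate

variable {A F : ℝ → ℝ}

theorem conjYoung_le {t c : ℝ} (h : ∀ s, 0 < s → s * t - A s ≤ c) : conjYoung A t ≤ c :=
  csSup_le ((nonempty_Ioi (a := (0:ℝ))).image _) (by rintro _ ⟨s, hs, rfl⟩; exact h s hs)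

theorem le_conjYoung {t s : ℝ} (hbdd : BddAbove ((fun s => s * t - A s) '' Ioi 0))
    (hs : 0 < s) : s * t - A s ≤ conjYoung A t :=
  le_csSup hbdd ⟨s, hs, rfl⟩

theorem mul_sub_le_of_sub_mul_le {τ a s : ℝ} (hτ : 0 ≤ τ) (hA : ∀ s, 0 < s → 0 ≤ A s)
    (hlin : ∀ s, a ≤ s → (s - a) * τ ≤ A s) (hs : 0 < s) : s * τ - A s ≤ a * τ := by
  rcases le_total s a with hsa | has
  · nlinarith [hA s hs]
  · linarith [hlin s has]

theorem geninv_le {t τ : ℝ} (hτ : 0 ≤ τ) (h : t ≤ F τ) : geninv F t ≤ τ :=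
  csInf_le ⟨0, fun _ hs => hs.1⟩ ⟨hτ, h⟩

theorem le_geninv {t τ σ : ℝ} (hσ : 0 ≤ σ) (hσt : t ≤ F σ)
    (h : ∀ s, 0 ≤ s → s < τ → F s < t) : τ ≤ geninv F t :=
  le_csInf ⟨σ, hσ, hσt⟩ fun s hs => not_lt.1 fun hsτ => (h s hs.1 hsτ).not_ge hs.2

end Conjugate

namespace MonotoneOn

variable {b : ℝ → ℝ}

theorem intervalIntegrable_of_Ici (hb : MonotoneOn b (Ici 0)) {a c : ℝ} (ha : 0 ≤ a)
    (hac : a ≤ c) : IntervalIntegrable b volume a c :=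
  (hb.mono fun _ hx => ha.trans (uIcc_of_le hac ▸ hx).1).intervalIntegrable

theorem sub_mul_le_intervalIntegral (hb : MonotoneOn b (Ici 0)) {a c : ℝ} (ha : 0 ≤ a)
    (hac : a ≤ c) : (c - a) * b a ≤ ∫ x in a..c, b x := by
  rw [← smul_eq_mul, ← intervalIntegral.integral_const]
  exact intervalIntegral.integral_mono_on hac intervalIntegrable_const
    (hb.intervalIntegrable_of_Ici ha hac) fun x hx => hb ha (ha.trans hx.1) hx.1

theorem intervalIntegral_le_sub_mul (hb : MonotoneOn b (Ici 0)) {a c : ℝ} (ha : 0 ≤ a)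
    (hac : a ≤ c) : ∫ x in a..c, b x ≤ (c - a) * b c := by
  rw [← smul_eq_mul, ← intervalIntegral.integral_const]
  exact intervalIntegral.integral_mono_on hac (hb.intervalIntegrable_of_Ici ha hac)
    intervalIntegrable_const fun x hx => hb (ha.trans hx.1) (ha.trans hac) hx.2

theorem integral_add_of_Ici (hb : MonotoneOn b (Ici 0)) {a s : ℝ} (ha : 0 ≤ a) (has : a ≤ s) :
    ∫ x in (0:ℝ)..s, b x = (∫ x in (0:ℝ)..a, b x) + ∫ x in a..s, b x :=
  (intervalIntegral.integral_add_adjacent_intervals (hb.intervalIntegrable_of_Ici le_rfl ha)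
    (hb.intervalIntegrable_of_Ici ha has)).symm

theorem primitive_nonneg (hb : MonotoneOn b (Ici 0)) (hb0 : 0 ≤ b 0) {s : ℝ} (hs : 0 ≤ s) :
    0 ≤ ∫ x in (0:ℝ)..s, b x := by
  nlinarith [hb.sub_mul_le_intervalIntegral le_rfl hs]

theorem sub_mul_le_primitive (hb : MonotoneOn b (Ici 0)) (hb0 : 0 ≤ b 0) {a s : ℝ}
    (ha : 0 ≤ a) (has : a ≤ s) : (s - a) * b a ≤ ∫ x in (0:ℝ)..s, b x := by
  rw [hb.integral_add_of_Ici ha has]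
  linarith [hb.primitive_nonneg hb0 ha, hb.sub_mul_le_intervalIntegral ha has]

theorem mul_sub_primitive_le (hb : MonotoneOn b (Ici 0)) (hb0 : 0 ≤ b 0) {τ a s : ℝ}
    (hτ : 0 ≤ τ) (ha : 0 ≤ a) (hτa : τ ≤ b a) (hs : 0 < s) :
    s * τ - ∫ x in (0:ℝ)..s, b x ≤ a * τ :=
  mul_sub_le_of_sub_mul_le hτ (fun _ hs => hb.primitive_nonneg hb0 hs.le)
    (fun _ has => (mul_le_mul_of_nonneg_left hτa (sub_nonneg.2 has)).trans
      (hb.sub_mul_le_primitive hb0 ha has)) hs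

theorem bddAbove_conjYoung_primitive (hb : MonotoneOn b (Ici 0)) (hb0 : 0 ≤ b 0)
    (hunb : ∀ M, ∃ a, 0 ≤ a ∧ M ≤ b a) {τ : ℝ} (hτ : 0 ≤ τ) :
    BddAbove ((fun s => s * τ - ∫ x in (0:ℝ)..s, b x) '' Ioi 0) := by
  obtain ⟨a, ha, hτa⟩ := hunb τ
  exact ⟨a * τ, by rintro _ ⟨s, hs, rfl⟩; exact hb.mul_sub_primitive_le hb0 hτ ha hτa hs⟩

end MonotoneOn

section Density

variable {u uinv : ℝ → ℝ}

theorem le_self_of_antitoneOn_div (hu_mono : MonotoneOn u (Ioo 0 1))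
    (hu_onto : u '' Ioo 0 1 = Ioo 0 1) (hu_qc : AntitoneOn (fun t => u t / t) (Ioo 0 1))
    {y : ℝ} (hy : y ∈ Ioo 0 1) : y ≤ u y := by
  by_contra! h
  have huy : u y ∈ Ioo 0 1 := hu_onto ▸ mem_image_of_mem u hy
  set M := max (u y / y) (u y)
  have hM : M < 1 := max_lt ((div_lt_one hy.1).2 h) huy.2
  -- if `u y < y`, then `u` stays below `M < 1` on all of `(0,1)`, contradicting surjectivity
  have hbound : ∀ z ∈ Ioo (0:ℝ) 1, u z ≤ M := by
    intro z hz
    rcases le_total z y with hzy | hyz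
    · exact (hu_mono hz hy hzy).trans (le_max_right _ _)
    · calc u z = u z / z * z := by field_simp [hz.1.ne']
        _ ≤ u y / y * z := mul_le_mul_of_nonneg_right (hu_qc hy hz hyz) hz.1.le
        _ ≤ u y / y := mul_le_of_le_one_right (div_pos huy.1 hy.1).le hz.2.le
        _ ≤ M := le_max_left _ _
  have hmid : (M + 1) / 2 ∈ u '' Ioo 0 1 := by
    rw [hu_onto]
    constructor <;> linarith [le_max_right (u y / y) (u y), huy.1]
  obtain ⟨z, hz, hzM⟩ := hmid
  linarith [hbound z hz]

theorem bfun_one_div (hu_onto : u '' Ioo 0 1 = Ioo 0 1)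
    (huinv' : ∀ t ∈ Ioo (0:ℝ) 1, uinv (u t) = t) {y : ℝ} (hy : y ∈ Ioo 0 1) :
    bfun uinv (1 / u y) = u y / y := by
  have huy : u y ∈ Ioo 0 1 := hu_onto ▸ mem_image_of_mem u hy
  rw [bfun, if_neg (not_le.2 ((one_lt_div huy.1).2 huy.2)), one_div_one_div, huinv' y hy]
  field_simp

theorem exists_eq_one_div (hu_onto : u '' Ioo 0 1 = Ioo 0 1) {s : ℝ} (hs : 1 < s) :
    ∃ y ∈ Ioo (0:ℝ) 1, s = 1 / u y := by
  have hs' : 1 / s ∈ u '' Ioo 0 1 := by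
    rw [hu_onto]
    exact ⟨by positivity, (div_lt_one (by linarith)).2 hs⟩
  obtain ⟨y, hy, hys⟩ := hs'
  exact ⟨y, hy, by rw [hys, one_div_one_div]⟩

theorem monotoneOn_bfun_s6 (hu_mono : StrictMonoOn u (Ioo 0 1))
    (hu_onto : u '' Ioo 0 1 = Ioo 0 1) (hu_qc : AntitoneOn (fun t => u t / t) (Ioo 0 1))
    (huinv' : ∀ t ∈ Ioo (0:ℝ) 1, uinv (u t) = t) : MonotoneOn (bfun uinv) (Ici 0) := by
  have hlarge : ∀ s, 1 < s → ∃ y ∈ Ioo (0:ℝ) 1, s = 1 / u y ∧ bfun uinv s = u y / y := by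
    intro s hs
    obtain ⟨y, hy, rfl⟩ := exists_eq_one_div hu_onto hs
    exact ⟨y, hy, rfl, bfun_one_div hu_onto huinv' hy⟩
  intro s _ s' _ hss'
  rcases le_or_gt s' 1 with hs'1 | hs'1
  · rwa [bfun, bfun, if_pos (hss'.trans hs'1), if_pos hs'1]
  obtain ⟨y', hy', rfl, hb'⟩ := hlarge s' hs'1
  rw [hb']
  rcases le_or_gt s 1 with hs1 | hs1
  · rw [bfun, if_pos hs1]
    exact hs1.trans ((one_le_div hy'.1).2
      (le_self_of_antitoneOn_div hu_mono.monotoneOn hu_onto hu_qc hy'))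
  obtain ⟨y, hy, rfl, hb⟩ := hlarge s hs1
  rw [hb]
  have huy : u y ∈ Ioo 0 1 := hu_onto ▸ mem_image_of_mem u hy
  have huy' : u y' ∈ Ioo 0 1 := hu_onto ▸ mem_image_of_mem u hy'
  have hu : u y' ≤ u y := (one_div_le_one_div huy.1 huy'.1).1 hss'
  exact hu_qc hy' hy ((hu_mono.le_iff_le hy' hy).1 hu)

theorem exists_le_bfun (hu_onto : u '' Ioo 0 1 = Ioo 0 1)
    (hu_lim : Tendsto (fun t => u t / t) (𝓝[>] 0) atTop)
    (huinv' : ∀ t ∈ Ioo (0:ℝ) 1, uinv (u t) = t) (M : ℝ) :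
    ∃ a, 0 ≤ a ∧ M ≤ bfun uinv a := by
  obtain ⟨y, hMy, hy⟩ :=
    ((hu_lim.eventually_ge_atTop M).and (Ioo_mem_nhdsGT zero_lt_one)).exists
  have huy : u y ∈ Ioo 0 1 := hu_onto ▸ mem_image_of_mem u hy
  exact ⟨1 / u y, (one_div_pos.2 huy.1).le, (bfun_one_div hu_onto huinv' hy).symm ▸ hMy⟩

theorem Bfun_one : Bfun uinv 1 = 1 / 2 := by
  have hid : EqOn (bfun uinv) (fun σ => σ) (uIcc 0 1) := fun σ hσ =>
    if_pos (uIcc_of_le (zero_le_one' ℝ) ▸ hσ).2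
  rw [Bfun, intervalIntegral.integral_congr hid, integral_id]
  norm_num

theorem Bfun_le (hb : MonotoneOn (bfun uinv) (Ici 0)) {s : ℝ} (hs : 1 ≤ s) :
    Bfun uinv s ≤ 1 / 2 + (s - 1) * bfun uinv s := by
  rw [Bfun, hb.integral_add_of_Ici zero_le_one hs, ← Bfun, Bfun_one]
  linarith [hb.intervalIntegral_le_sub_mul zero_le_one hs]

end Density

theorem statement6_general (u uinv : ℝ → ℝ)
    (hu_mono : StrictMonoOn u (Set.Ioo 0 1))
    (hu_onto : u '' Set.Ioo 0 1 = Set.Ioo 0 1)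
    (hu_qc : AntitoneOn (fun t => u t / t) (Set.Ioo 0 1))
    (hu_lim : Filter.Tendsto (fun t => u t / t) (nhdsWithin 0 (Set.Ioi 0)) Filter.atTop)
    (huinv' : ∀ t ∈ Set.Ioo (0:ℝ) 1, uinv (u t) = t) :
    ∀ t, 1 < t →
      (1/2) * (t * u (1 / t)) ≤ geninv (conjYoung (Bfun uinv)) t ∧
      geninv (conjYoung (Bfun uinv)) t ≤ 2 * (t * u (1 / t)) := by
  intro t ht
  have hx : 1 / t ∈ Ioo (0:ℝ) 1 := ⟨by positivity, (div_lt_one (by linarith)).2 ht⟩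
  have hux : u (1 / t) ∈ Ioo 0 1 := hu_onto ▸ mem_image_of_mem u hx
  have htux : 1 ≤ t * u (1 / t) := by
    have := le_self_of_antitoneOn_div hu_mono.monotoneOn hu_onto hu_qc hx
    rwa [← div_le_iff₀' (by linarith)]
  set s₀ := 1 / u (1 / t)
  have hs₀ : 1 < s₀ := (one_lt_div hux.1).2 hux.2
  have hbs₀ : bfun uinv s₀ = t * u (1 / t) := by
    rw [bfun_one_div hu_onto huinv' hx]
    field_simp
  have hs₀b : s₀ * (t * u (1 / t)) = t := by
    rw [one_div_mul_eq_div, mul_div_cancel_right₀ t hux.1.ne']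
  have hb := monotoneOn_bfun_s6 hu_mono hu_onto hu_qc huinv'
  have hb0 : 0 ≤ bfun uinv 0 := by simp [bfun]
  have hupper : t ≤ conjYoung (Bfun uinv) (2 * (t * u (1 / t))) := by
    have hsup : s₀ * (2 * (t * u (1 / t))) - Bfun uinv s₀
        ≤ conjYoung (Bfun uinv) (2 * (t * u (1 / t))) :=
      le_conjYoung (hb.bddAbove_conjYoung_primitive hb0 (exists_le_bfun hu_onto hu_lim huinv')
        (by positivity)) (zero_lt_one.trans hs₀)
    have hB := Bfun_le hb hs₀.le
    rw [hbs₀] at hB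
    linarith
  constructor
  · have hlower : t * u (1 / t) ≤ geninv (conjYoung (Bfun uinv)) t := by
      refine le_geninv (by positivity) hupper fun τ hτ hτlt => ?_
      have hconj : conjYoung (Bfun uinv) τ ≤ s₀ * τ := conjYoung_le fun _ hs =>
        hb.mul_sub_primitive_le hb0 hτ (zero_lt_one.trans hs₀).le (hbs₀ ▸ hτlt.le) hs
      nlinarith
    linarith
  · exact geninv_le (by positivity) hupper

theorem statement6 (u uinv : ℝ → ℝ)
    (hu_cont : ContinuousOn u (Set.Ioo 0 1))
    (hu_mono : StrictMonoOn u (Set.Ioo 0 1))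
    (hu_onto : u '' Set.Ioo 0 1 = Set.Ioo 0 1)
    (hu_qc : AntitoneOn (fun t => u t / t) (Set.Ioo 0 1))
    (hu_lim : Filter.Tendsto (fun t => u t / t) (nhdsWithin 0 (Set.Ioi 0)) Filter.atTop)
    (huinv : ∀ t ∈ Set.Ioo (0:ℝ) 1, uinv t ∈ Set.Ioo (0:ℝ) 1 ∧ u (uinv t) = t)
    (huinv' : ∀ t ∈ Set.Ioo (0:ℝ) 1, uinv (u t) = t) :
    ∀ t, 1 < t →
      (1/2) * (t * u (1 / t)) ≤ geninv (conjYoung (Bfun uinv)) t ∧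
      geninv (conjYoung (Bfun uinv)) t ≤ 2 * (t * u (1 / t)) :=
  statement6_general u uinv hu_mono hu_onto hu_qc hu_lim huinv'
end
end

section
/- Suppose f and g are real-valued functions that are differentiable (with finite derivatives) on some interval (a,∞), that g'(x)>0 on (a,∞), and that g(x)→∞ as x→∞. Then liminf_{x→∞} f'(x)/g'(x) ≤ liminf_{x→∞} f(x)/g(x) (an inequality in the extended real numbers). -/
/-!
If `m < liminf f'/g'`, then eventually `(f - m g)' = f' - m g' > 0` because `g' > 0`, so
`f - m g` is eventually monotone: `f x ≥ m g x + C` for large `x`. Dividing by `g x → ∞`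
gives `f x / g x ≥ m + C / g x → m`, hence `liminf f/g ≥ m`.
-/

open Filter Topology Set

lemma exists_monotoneOn_Ici_sub_mul_of_eventually_lt_div {f g f' g' : ℝ → ℝ} {m : ℝ}
    (hf : ∀ᶠ x in atTop, HasDerivAt f (f' x) x) (hg : ∀ᶠ x in atTop, HasDerivAt g (g' x) x)
    (hg' : ∀ᶠ x in atTop, 0 < g' x) (hm : ∀ᶠ x in atTop, m < f' x / g' x) :
    ∃ b, MonotoneOn (fun x => f x - m * g x) (Ici b) := by
  obtain ⟨b, hb⟩ := (hf.and (hg.and (hg'.and hm))).exists_forall_of_atTop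
  have hderiv : ∀ x ∈ Ici b, HasDerivAt (fun x => f x - m * g x) (f' x - m * g' x) x :=
    fun x hx => (hb x hx).1.sub ((hb x hx).2.1.const_mul m)
  refine ⟨b, monotoneOn_of_hasDerivWithinAt_nonneg (convex_Ici b)
    (fun x hx => (hderiv x hx).continuousAt.continuousWithinAt)
    (fun x hx => (hderiv x (interior_subset hx)).hasDerivWithinAt) fun x hx => ?_⟩
  obtain ⟨-, -, hgx, hmx⟩ := hb x (interior_subset hx)
  linarith [(lt_div_iff₀ hgx).mp hmx]

lemma coe_le_liminf_div_of_monotoneOn_Ici {f g : ℝ → ℝ} {m b : ℝ}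
    (hmono : MonotoneOn (fun x => f x - m * g x) (Ici b)) (hg : Tendsto g atTop atTop) :
    (m : EReal) ≤ liminf (fun x => ((f x / g x : ℝ) : EReal)) atTop := by
  set C := f b - m * g b
  have hlim : Tendsto (fun x => ((m + C / g x : ℝ) : EReal)) atTop (𝓝 m) := by
    refine (continuous_coe_real_ereal.tendsto m).comp ?_
    simpa using (tendsto_const_nhds (x := C)).div_atTop hg |>.const_add m
  rw [← hlim.liminf_eq]
  refine liminf_le_liminf ?_
  filter_upwards [eventually_ge_atTop b, hg.eventually_gt_atTop 0] with x hbx hgx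
  have hCx : C ≤ f x - m * g x := hmono self_mem_Ici hbx hbx
  rw [EReal.coe_le_coe_iff, add_div' _ _ _ hgx.ne']
  gcongr
  linarith

/-- A one-sided L'Hôpital-type inequality for lower limits (in the extended reals):
if `f` and `g` are differentiable on a neighborhood `(a,∞)` of infinity, `g' > 0` there and
`g → ∞`, then `liminf f'/g' ≤ liminf f/g`. -/
theorem statement14 (f g f' g' : ℝ → ℝ) (a : ℝ)
    (hf : ∀ x ∈ Set.Ioi a, HasDerivAt f (f' x) x)
    (hg : ∀ x ∈ Set.Ioi a, HasDerivAt g (g' x) x)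
    (hg' : ∀ x ∈ Set.Ioi a, 0 < g' x)
    (hgtop : Filter.Tendsto g Filter.atTop Filter.atTop) :
    Filter.liminf (fun x => ((f' x / g' x : ℝ) : EReal)) Filter.atTop
      ≤ Filter.liminf (fun x => ((f x / g x : ℝ) : EReal)) Filter.atTop := by
  refine EReal.ge_of_forall_gt_iff_ge.mp fun m hm => ?_
  have hm' : ∀ᶠ x in atTop, m < f' x / g' x :=
    (eventually_lt_of_lt_liminf hm).mono fun _ hx => EReal.coe_lt_coe_iff.mp hx
  have ha := eventually_gt_atTop a
  obtain ⟨b, hmono⟩ := exists_monotoneOn_Ici_sub_mul_of_eventually_lt_div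
    (ha.mono hf) (ha.mono hg) (ha.mono hg') hm'
  exact coe_le_liminf_div_of_monotoneOn_Ici hmono hgtop
end

section
/- Let G:(0,∞)→(0,∞) be a continuous nondecreasing function satisfying the Δ₂ condition at infinity. Then the following are equivalent: (i) for every K≥1, limsup_{t→∞} (1/G(Kt)) ∫_1^t (G(s)/s) ds = ∞; (ii) limsup_{t→∞} (1/G(t)) ∫_1^t (G(s)/s) ds = ∞; (iii) for every K≥1, liminf_{t→∞} G(Kt)/G(t) = 1. -/
/-!
Write `I(t) = ∫₁ᵗ G(s)/s ds`. Monotonicity gives `G(a) log(b/a) ≤ ∫ₐᵇ G(s)/s ds ≤ G(b) log(b/a)`,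
and iterating the Δ₂ condition gives `G(Kt) ≤ C G(t)` for large `t`; this makes (i) and (ii)
equivalent and keeps `G(Kt)/G(t)` between `1` and `C`.

If `c G(t) ≤ G(Kt)` eventually for some `c > 1`, the substitution `s ↦ Ks` gives
`(c - 1) ∫_T^t G(s)/s ds ≤ G(Kt) log K ≤ C G(t) log K`, so `I(t)/G(t)` stays bounded: (ii) forces
the liminf in (iii) down to `1`. Conversely, if `G(Kt) < 2 G(t)` for arbitrarily large `t`, then
`I(Kt) ≥ G(t) log K > G(Kt) log K / 2`, and `K` is arbitrary.
-/

open MeasureTheory Filter Set Real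

theorem liminf_eq_iff_frequently_lt {α : Type*} {l : Filter α} [l.NeBot] {f : α → ℝ} {a : ℝ}
    (hlow : ∀ᶠ x in l, a ≤ f x) (hup : IsBoundedUnder (· ≤ ·) l f) :
    liminf f l = a ↔ ∀ b, a < b → ∃ᶠ x in l, f x < b := by
  refine ⟨fun h b hb => frequently_lt_of_liminf_lt hup.isCoboundedUnder_ge (h ▸ hb),
    fun h => le_antisymm (le_of_forall_gt_imp_ge_of_dense fun b hb => ?_)
      (le_liminf_of_le hup.isCoboundedUnder_ge hlow)⟩
  exact liminf_le_of_frequently_le ((h b hb).mono fun _ => le_of_lt)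
    (isBoundedUnder_of_eventually_ge hlow)

section

variable {G : ℝ → ℝ} {a b : ℝ}

theorem MonotoneOn.intervalIntegrable_div_id (hG : MonotoneOn G (Ioi 0)) (ha : 0 < a)
    (hab : a ≤ b) : IntervalIntegrable (fun s => G s / s) volume a b := by
  have hsub : uIcc a b ⊆ Ioi 0 := fun x hx => ha.trans_le (uIcc_of_le hab ▸ hx).1
  simpa only [div_eq_mul_inv] using
    (hG.mono hsub).intervalIntegrable.mul_continuousOn
      (continuousOn_inv₀.mono fun x hx => (hsub hx).ne')

theorem integral_const_div_id (c : ℝ) (ha : 0 < a) (hb : 0 < b) :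
    ∫ s in a..b, c / s = c * log (b / a) := by
  simp only [← mul_one_div c, intervalIntegral.integral_const_mul, integral_one_div_of_pos ha hb]

theorem MonotoneOn.integral_div_id_le (hG : MonotoneOn G (Ioi 0)) (ha : 0 < a) (hab : a ≤ b) :
    ∫ s in a..b, G s / s ≤ G b * log (b / a) := by
  rw [← integral_const_div_id _ ha (ha.trans_le hab)]
  refine intervalIntegral.integral_mono_on hab (hG.intervalIntegrable_div_id ha hab)
    (monotoneOn_const.intervalIntegrable_div_id ha hab) fun s hs => ?_
  have hs0 : 0 < s := ha.trans_le hs.1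
  exact div_le_div_of_nonneg_right (hG hs0 (ha.trans_le hab) hs.2) hs0.le

theorem MonotoneOn.le_integral_div_id (hG : MonotoneOn G (Ioi 0)) (ha : 0 < a) (hab : a ≤ b) :
    G a * log (b / a) ≤ ∫ s in a..b, G s / s := by
  rw [← integral_const_div_id _ ha (ha.trans_le hab)]
  refine intervalIntegral.integral_mono_on hab (monotoneOn_const.intervalIntegrable_div_id ha hab)
    (hG.intervalIntegrable_div_id ha hab) fun s hs => ?_
  have hs0 : 0 < s := ha.trans_le hs.1
  exact div_le_div_of_nonneg_right (hG ha hs0 hs.1) hs0.le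

theorem setIntegral_Ioo_eq_intervalIntegral (hab : a ≤ b) (f : ℝ → ℝ) :
    ∫ s in Ioo a b, f s = ∫ s in a..b, f s := by
  rw [intervalIntegral.integral_of_le hab, integral_Ioc_eq_integral_Ioo]

theorem integral_Ioo_one_div_id_nonneg (hpos : ∀ t, 0 < t → 0 < G t) (t : ℝ) :
    0 ≤ ∫ s in Ioo 1 t, G s / s :=
  setIntegral_nonneg measurableSet_Ioo fun s hs =>
    have hs0 : (0 : ℝ) < s := one_pos.trans hs.1
    div_nonneg (hpos s hs0).le hs0.le

theorem MonotoneOn.eventually_comp_mul_le {K₀ K : ℝ} (hG : MonotoneOn G (Ioi 0)) (hK₀ : 0 ≤ K₀)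
    (hΔ2 : ∀ᶠ t in atTop, G (2 * t) ≤ K₀ * G t) (hK : 1 ≤ K) :
    ∃ C, ∀ᶠ t in atTop, G (K * t) ≤ C * G t := by
  have hpow : ∀ n : ℕ, ∀ᶠ t in atTop, G (2 ^ n * t) ≤ K₀ ^ n * G t := by
    intro n
    induction n with
    | zero => simp
    | succ n ih =>
      obtain ⟨T, hT⟩ := eventually_atTop.1 hΔ2
      filter_upwards [ih, eventually_ge_atTop (max T 0)] with t ht htT
      calc G (2 ^ (n + 1) * t) = G (2 * (2 ^ n * t)) := by ring_nf
        _ ≤ K₀ * G (2 ^ n * t) := hT _ (le_max_left T 0 |>.trans htT |>.trans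
            (le_mul_of_one_le_left ((le_max_right T 0).trans htT) (one_le_pow₀ one_le_two)))
        _ ≤ K₀ * (K₀ ^ n * G t) := by gcongr
        _ = K₀ ^ (n + 1) * G t := by ring
  obtain ⟨n, hn⟩ := pow_unbounded_of_one_lt K one_lt_two
  refine ⟨K₀ ^ n, ?_⟩
  filter_upwards [hpow n, eventually_gt_atTop 0] with t ht ht0
  exact (hG (mul_pos (one_pos.trans_le hK) ht0) (by simp only [mem_Ioi]; positivity)
    (mul_le_mul_of_nonneg_right hn.le ht0.le)).trans ht

theorem MonotoneOn.integral_div_id_mono_interval {c d : ℝ} (hG : MonotoneOn G (Ioi 0))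
    (hpos : ∀ t, 0 < t → 0 < G t) (hc : 0 < c) (hca : c ≤ a) (hab : a ≤ b) (hbd : b ≤ d) :
    ∫ s in a..b, G s / s ≤ ∫ s in c..d, G s / s :=
  intervalIntegral.integral_mono_interval hca hab hbd
    (ae_restrict_of_forall_mem measurableSet_Ioc fun s hs =>
      have hs0 : 0 < s := hc.trans hs.1
      div_nonneg (hpos s hs0).le hs0.le)
    (hG.intervalIntegrable_div_id hc (hca.trans (hab.trans hbd)))

theorem MonotoneOn.sub_one_mul_integral_div_id_le {K c T t : ℝ} (hG : MonotoneOn G (Ioi 0))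
    (hpos : ∀ s, 0 < s → 0 < G s) (hK : 1 ≤ K) (hT : 0 < T) (ht : T ≤ t)
    (hc : ∀ s, T ≤ s → c * G s ≤ G (K * s)) :
    (c - 1) * ∫ s in T..t, G s / s ≤ G (K * t) * log K := by
  have hK0 : 0 < K := one_pos.trans_le hK
  have htKt : t ≤ K * t := le_mul_of_one_le_left (hT.le.trans ht) hK
  have hGK : MonotoneOn (fun s => G (K * s)) (Ioi 0) := fun x hx y hy hxy =>
    hG (mul_pos hK0 hx) (mul_pos hK0 hy) (by gcongr)
  -- With `J(t) = ∫_T^t G(s)/s ds`: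
  -- `c J(t) ≤ ∫_T^t G(Ks)/s ds = ∫_{KT}^{Kt} G(u)/u du ≤ J(t) + ∫_t^{Kt} G(u)/u du`
  have hsubst : ∫ s in T..t, G (K * s) / s = ∫ u in K * T..K * t, G u / u := by
    rw [← intervalIntegral.smul_integral_comp_mul_left, smul_eq_mul,
      ← intervalIntegral.integral_const_mul]
    refine intervalIntegral.integral_congr fun s hs => ?_
    have hs0 : s ≠ 0 := (hT.trans_le (uIcc_of_le ht ▸ hs).1).ne'
    field_simp
  have hlower : c * ∫ s in T..t, G s / s ≤ ∫ s in T..t, G (K * s) / s := by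
    rw [← intervalIntegral.integral_const_mul]
    refine intervalIntegral.integral_mono_on ht ((hG.intervalIntegrable_div_id hT ht).const_mul c)
      (hGK.intervalIntegrable_div_id hT ht) fun s hs => ?_
    rw [← mul_div_assoc]
    exact div_le_div_of_nonneg_right (hc s hs.1) (hT.trans_le hs.1).le
  have hupper : ∫ u in K * T..K * t, G u / u ≤ ∫ u in T..K * t, G u / u :=
    hG.integral_div_id_mono_interval hpos hT (le_mul_of_one_le_left hT.le hK) (by gcongr) le_rfl
  have hsplit : ∫ u in T..K * t, G u / u = (∫ u in T..t, G u / u) + ∫ u in t..K * t, G u / u :=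
    (intervalIntegral.integral_add_adjacent_intervals (hG.intervalIntegrable_div_id hT ht)
      (hG.intervalIntegrable_div_id (hT.trans_le ht) htKt)).symm
  have htail : ∫ u in t..K * t, G u / u ≤ G (K * t) * log K := by
    simpa only [mul_div_cancel_right₀ K (hT.trans_le ht).ne'] using
      hG.integral_div_id_le (hT.trans_le ht) htKt
  linarith

theorem MonotoneOn.liminf_comp_mul_div_eq_one_iff {K C : ℝ} (hG : MonotoneOn G (Ioi 0))
    (hpos : ∀ t, 0 < t → 0 < G t) (hK : 1 ≤ K) (hup : ∀ᶠ t in atTop, G (K * t) ≤ C * G t) :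
    liminf (fun t => G (K * t) / G t) atTop = 1 ↔
      ∀ c, 1 < c → ∃ᶠ t in atTop, G (K * t) < c * G t := by
  have hlow : ∀ᶠ t in atTop, 1 ≤ G (K * t) / G t := by
    filter_upwards [eventually_gt_atTop 0] with t ht
    rw [one_le_div (hpos t ht)]
    exact hG ht (mul_pos (one_pos.trans_le hK) ht) (le_mul_of_one_le_left ht.le hK)
  have hbdd : IsBoundedUnder (· ≤ ·) atTop fun t => G (K * t) / G t :=
    isBoundedUnder_of_eventually_le <| by
      filter_upwards [hup, eventually_gt_atTop 0] with t ht ht0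
      exact (div_le_iff₀ (hpos t ht0)).2 ht
  rw [liminf_eq_iff_frequently_lt hlow hbdd]
  refine forall₂_congr fun c _ => frequently_congr ?_
  filter_upwards [eventually_gt_atTop 0] with t ht
  exact div_lt_iff₀ (hpos t ht)

theorem MonotoneOn.exists_eventually_integral_div_le {K c C : ℝ} (hG : MonotoneOn G (Ioi 0))
    (hpos : ∀ t, 0 < t → 0 < G t) (hK : 1 ≤ K) (hc : 1 < c)
    (hlow : ∀ᶠ t in atTop, c * G t ≤ G (K * t)) (hup : ∀ᶠ t in atTop, G (K * t) ≤ C * G t) :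
    ∃ B, ∀ᶠ t in atTop, (1 / G t) * ∫ s in Ioo 1 t, G s / s ≤ B := by
  obtain ⟨T₀, hT₀⟩ := eventually_atTop.1 hlow
  set T := max T₀ 1
  have hT : 0 < T := one_pos.trans_le (le_max_right _ _)
  have hA : 0 ≤ ∫ s in (1 : ℝ)..T, G s / s := by
    rw [← setIntegral_Ioo_eq_intervalIntegral (le_max_right _ _)]
    exact integral_Ioo_one_div_id_nonneg hpos T
  set A := ∫ s in (1 : ℝ)..T, G s / s
  refine ⟨A / G T + C * log K / (c - 1), ?_⟩
  filter_upwards [hup, eventually_ge_atTop T] with t hCt ht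
  have ht0 : 0 < t := hT.trans_le ht
  have hsplit : ∫ s in Ioo 1 t, G s / s = A + ∫ s in T..t, G s / s := by
    rw [setIntegral_Ioo_eq_intervalIntegral ((le_max_right _ _).trans ht)]
    exact (intervalIntegral.integral_add_adjacent_intervals
      (hG.intervalIntegrable_div_id one_pos (le_max_right _ _))
      (hG.intervalIntegrable_div_id hT ht)).symm
  have hJ : (c - 1) * ∫ s in T..t, G s / s ≤ C * log K * G t :=
    (hG.sub_one_mul_integral_div_id_le hpos hK hT ht
      fun s hs => hT₀ s ((le_max_left _ _).trans hs)).trans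
      (by nlinarith [log_nonneg hK])
  have hAt : A / G t ≤ A / G T := div_le_div_of_nonneg_left hA (hpos T hT) (hG hT ht0 ht)
  have hJt : (∫ s in T..t, G s / s) / G t ≤ C * log K / (c - 1) := by
    rw [div_le_div_iff₀ (hpos t ht0) (sub_pos.2 hc)]
    linarith
  rw [hsplit, one_div_mul_eq_div, add_div]
  exact add_le_add hAt hJt

theorem MonotoneOn.frequently_log_div_le_integral {K c : ℝ} (hG : MonotoneOn G (Ioi 0))
    (hpos : ∀ t, 0 < t → 0 < G t) (hK : 1 ≤ K) (hc : 0 < c)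
    (hfreq : ∃ᶠ t in atTop, G (K * t) < c * G t) :
    ∃ᶠ t in atTop, log K / c ≤ (1 / G t) * ∫ s in Ioo 1 t, G s / s := by
  have hK0 : 0 < K := one_pos.trans_le hK
  refine (tendsto_id.const_mul_atTop hK0).frequently ?_
  refine (hfreq.and_eventually (eventually_ge_atTop 1)).mono fun t ⟨hlt, ht⟩ => ?_
  have ht0 : 0 < t := one_pos.trans_le ht
  have htKt : t ≤ K * t := le_mul_of_one_le_left ht0.le hK
  have hhead : G t * log K ≤ ∫ s in t..K * t, G s / s := by
    simpa only [mul_div_cancel_right₀ K ht0.ne'] using hG.le_integral_div_id ht0 htKt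
  have hmono : ∫ s in t..K * t, G s / s ≤ ∫ s in Ioo 1 (K * t), G s / s := by
    rw [setIntegral_Ioo_eq_intervalIntegral (ht.trans htKt)]
    exact hG.integral_div_id_mono_interval hpos one_pos ht htKt le_rfl
  rw [id, one_div_mul_eq_div, le_div_iff₀ (hpos _ (mul_pos hK0 ht0)), div_mul_eq_mul_div,
    div_le_iff₀ hc]
  nlinarith [log_nonneg hK]

theorem frequently_le_one_div_comp_mul_mul_integral {K C : ℝ} (hpos : ∀ t, 0 < t → 0 < G t)
    (hK : 0 < K) (hup : ∀ᶠ t in atTop, G (K * t) ≤ C * G t)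
    (h : ∀ M, ∃ᶠ t in atTop, M ≤ (1 / G t) * ∫ s in Ioo 1 t, G s / s) (M : ℝ) :
    ∃ᶠ t in atTop, M ≤ (1 / G (K * t)) * ∫ s in Ioo 1 t, G s / s := by
  refine ((h (C * M)).and_eventually (hup.and (eventually_gt_atTop 0))).mono
    fun t ⟨hM, hCt, ht0⟩ => ?_
  have hI := integral_Ioo_one_div_id_nonneg hpos t
  rw [one_div_mul_eq_div] at hM ⊢
  rw [le_div_iff₀ (hpos t ht0)] at hM
  rw [le_div_iff₀ (hpos _ (mul_pos hK ht0))]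
  rcases le_total M 0 with hM0 | hM0 <;> nlinarith [hpos _ (mul_pos hK ht0)]

end

theorem statement15_general (G : ℝ → ℝ)
    (hGpos : ∀ t : ℝ, 0 < t → 0 < G t)
    (hGmono : MonotoneOn G (Set.Ioi 0))
    (hΔ2 : ∃ K₀ T : ℝ, 0 < K₀ ∧ 0 ≤ T ∧ ∀ t : ℝ, T ≤ t → 0 < t → G (2 * t) ≤ K₀ * G t) :
    -- (i) ↔ (ii)
    ((∀ K : ℝ, 1 ≤ K → ∀ M : ℝ, ∃ᶠ t in Filter.atTop,
        M ≤ (1 / G (K * t)) * ∫ s in Set.Ioo (1:ℝ) t, G s / s) ↔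
      (∀ M : ℝ, ∃ᶠ t in Filter.atTop,
        M ≤ (1 / G t) * ∫ s in Set.Ioo (1:ℝ) t, G s / s)) ∧
    -- (ii) ↔ (iii)
    ((∀ M : ℝ, ∃ᶠ t in Filter.atTop,
        M ≤ (1 / G t) * ∫ s in Set.Ioo (1:ℝ) t, G s / s) ↔
      (∀ K : ℝ, 1 ≤ K →
        Filter.liminf (fun t => G (K * t) / G t) Filter.atTop = 1)) := by
  obtain ⟨K₀, T, hK₀, -, hT⟩ := hΔ2
  have hgrowth : ∀ K, 1 ≤ K → ∃ C, ∀ᶠ t in atTop, G (K * t) ≤ C * G t := fun K hK =>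
    hGmono.eventually_comp_mul_le hK₀.le
      (by filter_upwards [eventually_ge_atTop T, eventually_gt_atTop 0] using hT) hK
  refine ⟨⟨fun h M => by simpa only [one_mul] using h 1 le_rfl M, fun h K hK => ?_⟩,
    ⟨fun h K hK => ?_, fun h M => ?_⟩⟩
  · obtain ⟨C, hC⟩ := hgrowth K hK
    exact frequently_le_one_div_comp_mul_mul_integral hGpos (one_pos.trans_le hK) hC h
  · obtain ⟨C, hC⟩ := hgrowth K hK
    refine (hGmono.liminf_comp_mul_div_eq_one_iff hGpos hK hC).2 fun c hc => ?_
    by_contra hnot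
    obtain ⟨B, hB⟩ := hGmono.exists_eventually_integral_div_le hGpos hK hc
      (by simpa only [not_frequently, not_lt] using hnot) hC
    obtain ⟨t, hBt, htB⟩ := ((h (B + 1)).and_eventually hB).exists
    linarith
  · set K := exp (2 * |M|)
    have hK : 1 ≤ K := one_le_exp (by positivity)
    obtain ⟨C, hC⟩ := hgrowth K hK
    have hfreq := (hGmono.liminf_comp_mul_div_eq_one_iff hGpos hK hC).1 (h K hK) 2 one_lt_two
    refine (hGmono.frequently_log_div_le_integral hGpos hK two_pos hfreq).mono fun t ht => ?_
    rw [log_exp, mul_div_cancel_left₀ _ two_ne_zero] at ht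
    exact (le_abs_self M).trans ht

theorem statement15 (G : ℝ → ℝ)
    (hGpos : ∀ t : ℝ, 0 < t → 0 < G t)
    (hGcont : ContinuousOn G (Set.Ioi 0))
    (hGmono : MonotoneOn G (Set.Ioi 0))
    (hΔ2 : ∃ K₀ T : ℝ, 0 < K₀ ∧ 0 ≤ T ∧ ∀ t : ℝ, T ≤ t → 0 < t → G (2 * t) ≤ K₀ * G t) :
    -- (i) ↔ (ii)
    ((∀ K : ℝ, 1 ≤ K → ∀ M : ℝ, ∃ᶠ t in Filter.atTop,
        M ≤ (1 / G (K * t)) * ∫ s in Set.Ioo (1:ℝ) t, G s / s) ↔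
      (∀ M : ℝ, ∃ᶠ t in Filter.atTop,
        M ≤ (1 / G t) * ∫ s in Set.Ioo (1:ℝ) t, G s / s)) ∧
    -- (ii) ↔ (iii)
    ((∀ M : ℝ, ∃ᶠ t in Filter.atTop,
        M ≤ (1 / G t) * ∫ s in Set.Ioo (1:ℝ) t, G s / s) ↔
      (∀ K : ℝ, 1 ≤ K →
        Filter.liminf (fun t => G (K * t) / G t) Filter.atTop = 1)) :=
  statement15_general G hGpos hGmono hΔ2
end
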